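/- arXiv:1803.06263 — 7 statements merged into one kernel-verified Lean document; each statement's English description precedes it below -/
import Mathlib

section
/- Let X be a topological space and T ∈ Aut(X) of infinite order. If the symmetry group S(X,T) is infinite cyclic (isomorphic to ℤ) and T is reversible (there exists G ∈ Aut(X) with G∘T∘G⁻¹ = T⁻¹), then every reversor of T is an involution (G∘T∘G⁻¹ = T⁻¹ implies G² = id), and R(X,T) = S(X,T) ⋊ C₂ is isomorphic to the infinite dihedral group D∞. -/
section Aux

variable {M : Type*} [Group M]

private lemma conj_mem_iff (T g : M) :
    g * T * g⁻¹ = T ↔ g ∈ Subgroup.centralizer ({T} : Set M) := by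
  rw [Subgroup.mem_centralizer_singleton_iff, mul_inv_eq_iff_eq_mul, eq_comm]

private lemma conj_inv_eq {T U a : M} (h : a * T * a⁻¹ = U) : a * T⁻¹ * a⁻¹ = U⁻¹ := by
  rw [← h]; group

private lemma inv_conj_eq {T U a : M} (h : a * T * a⁻¹ = U) : a⁻¹ * U * a = T := by
  rw [← h]; group

private lemma conj_mem_centralizer {T G s : M} (hG : G * T * G⁻¹ = T⁻¹)
    (hs : s ∈ Subgroup.centralizer ({T} : Set M)) :
    G * s * G⁻¹ ∈ Subgroup.centralizer ({T} : Set M) := by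
  rw [Subgroup.mem_centralizer_singleton_iff] at hs ⊢
  have hG' : G * T⁻¹ * G⁻¹ = T := by
    have := conj_inv_eq hG; rwa [inv_inv] at this
  have hs' : s * T⁻¹ = T⁻¹ * s := (Commute.inv_right hs).eq
  calc (G * s * G⁻¹) * T = (G * s * G⁻¹) * (G * T⁻¹ * G⁻¹) := by rw [hG']
    _ = G * (s * T⁻¹) * G⁻¹ := by group
    _ = G * (T⁻¹ * s) * G⁻¹ := by rw [hs']
    _ = (G * T⁻¹ * G⁻¹) * (G * s * G⁻¹) := by group
    _ = T * (G * s * G⁻¹) := by rw [hG']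

/-- A reversor conjugates every element of the centralizer to its inverse. -/
private lemma reversor_inverts {T : M} (hT1 : T ≠ 1)
    (e : Subgroup.centralizer ({T} : Set M) ≃* Multiplicative ℤ)
    {G : M} (hG : G * T * G⁻¹ = T⁻¹) {s : M}
    (hs : s ∈ Subgroup.centralizer ({T} : Set M)) : G * s * G⁻¹ = s⁻¹ := by
  set S := Subgroup.centralizer ({T} : Set M) with hSdef
  have hTS : T ∈ S := Subgroup.mem_centralizer_singleton_iff.mpr rfl
  -- conjugation by G as a monoid hom on S
  let φ : S →* S := MonoidHom.mk'
    (fun s => ⟨G * (s : M) * G⁻¹, conj_mem_centralizer hG s.2⟩)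
    (by intro a b; apply Subtype.ext; show G * (a * b : M) * G⁻¹ = _; push_cast; group)
  let F : Multiplicative ℤ →* Multiplicative ℤ :=
    e.toMonoidHom.comp (φ.comp e.symm.toMonoidHom)
  have key : ∀ x : S, F (e x) = e ⟨G * (x : M) * G⁻¹, conj_mem_centralizer hG x.2⟩ := by
    intro x
    simp only [F, MonoidHom.comp_apply, MulEquiv.coe_toMonoidHom, MulEquiv.symm_apply_apply]
    rfl
  have hlin : ∀ m : ℤ, (F (Multiplicative.ofAdd m)).toAdd
      = m * (F (Multiplicative.ofAdd 1)).toAdd := by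
    intro m
    have : (Multiplicative.ofAdd m) = (Multiplicative.ofAdd (1 : ℤ)) ^ m := by
      simp [← ofAdd_zsmul]
    rw [this, map_zpow, toAdd_zpow, smul_eq_mul]
  set t : S := ⟨T, hTS⟩ with ht
  have hFt : F (e t) = (e t)⁻¹ := by
    rw [key t, ← map_inv]
    congr 1
    exact Subtype.ext hG
  have ha0 : (e t).toAdd ≠ 0 := by
    intro h
    have : e t = 1 := by
      have := congrArg Multiplicative.ofAdd h
      simpa using this
    have : t = 1 := by
      have := congrArg e.symm this
      simpa using this
    exact hT1 (congrArg Subtype.val this)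
  have hFone : (F (Multiplicative.ofAdd 1)).toAdd = -1 := by
    have h1 := hlin (e t).toAdd
    rw [ofAdd_toAdd, hFt] at h1
    have h2 : (-(e t).toAdd : ℤ) = (e t).toAdd * (F (Multiplicative.ofAdd 1)).toAdd := by
      simpa using h1
    have := mul_left_cancel₀ ha0 (by rw [← h2]; ring : (e t).toAdd * (-1 : ℤ) = (e t).toAdd * (F (Multiplicative.ofAdd 1)).toAdd)
    omega
  -- now apply to s
  set x : S := ⟨s, hs⟩ with hx
  have h3 : (F (e x)).toAdd = -((e x).toAdd) := by
    have := hlin (e x).toAdd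
    rw [ofAdd_toAdd] at this
    rw [this, hFone]; ring
  have h4 : F (e x) = (e x)⁻¹ := by
    have := congrArg Multiplicative.ofAdd h3
    simpa using this
  rw [key x, ← map_inv] at h4
  have := e.injective h4
  exact congrArg Subtype.val this

/-- Every reversor is an involution. -/
private lemma reversor_sq {T : M} (hT : ∀ n : ℤ, n ≠ 0 → T ^ n ≠ 1)
    (e : Subgroup.centralizer ({T} : Set M) ≃* Multiplicative ℤ)
    {G : M} (hG : G * T * G⁻¹ = T⁻¹) : G * G = 1 := by
  have hT1 : T ≠ 1 := by simpa using hT 1 one_ne_zero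
  have hGG : G * G ∈ Subgroup.centralizer ({T} : Set M) := by
    rw [← conj_mem_iff]
    have : G * G * T * (G * G)⁻¹ = G * (G * T * G⁻¹) * G⁻¹ := by group
    rw [this, hG]
    have := conj_inv_eq hG
    rwa [inv_inv] at this
  have h1 : G * (G * G) * G⁻¹ = (G * G)⁻¹ := reversor_inverts hT1 e hG hGG
  have h2 : G * (G * G) * G⁻¹ = G * G := by group
  have hval : G * G = (G * G)⁻¹ := by rw [← h1, h2]
  have h3 : (⟨G * G, hGG⟩ : Subgroup.centralizer ({T} : Set M))
      = (⟨G * G, hGG⟩ : Subgroup.centralizer ({T} : Set M))⁻¹ :=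
    Subtype.ext hval
  have h4 : e ⟨G * G, hGG⟩ = (e ⟨G * G, hGG⟩)⁻¹ := by
    conv_lhs => rw [h3]
    exact map_inv e _
  have h5 : (e ⟨G * G, hGG⟩).toAdd = 0 := by
    have := congrArg Multiplicative.toAdd h4
    simp only [toAdd_inv] at this
    omega
  have h6 : e ⟨G * G, hGG⟩ = 1 := by
    have := congrArg Multiplicative.ofAdd h5
    simpa using this
  have h7 : (⟨G * G, hGG⟩ : Subgroup.centralizer ({T} : Set M)) = 1 := by
    have := congrArg e.symm h6
    simpa using this
  exact congrArg Subtype.val h7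

end Aux

instance homeoGroup (X : Type*) [TopologicalSpace X] : Group (X ≃ₜ X) where
  mul f g := g.trans f
  one := Homeomorph.refl X
  inv := Homeomorph.symm
  mul_assoc _ _ _ := rfl
  one_mul _ := Homeomorph.ext fun _ => rfl
  mul_one _ := Homeomorph.ext fun _ => rfl
  inv_mul_cancel := Homeomorph.self_trans_symm

/-- If $T$ has infinite order, $S(X,T) \cong \mathbb{Z}$, and $T$ is
reversible, then every reversor is an involution and
$R(X,T) = S(X,T) \rtimes C_2 \cong D_\infty$ (the infinite dihedral group,
`DihedralGroup 0` in Mathlib). -/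
theorem stmt5 {X : Type*} [TopologicalSpace X] (T : X ≃ₜ X)
    (hT : ∀ n : ℤ, n ≠ 0 → T ^ n ≠ 1)
    (hS : Nonempty (Subgroup.centralizer {T} ≃* Multiplicative ℤ))
    (hrev : ∃ G : X ≃ₜ X, G * T * G⁻¹ = T⁻¹) :
    (∀ G : X ≃ₜ X, G * T * G⁻¹ = T⁻¹ → G ^ 2 = 1) ∧
    ∃ R : Subgroup (X ≃ₜ X),
      (R : Set (X ≃ₜ X)) = {G : X ≃ₜ X | G * T * G⁻¹ = T ∨ G * T * G⁻¹ = T⁻¹} ∧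
      Nonempty (R ≃* DihedralGroup 0) := by
  obtain ⟨e⟩ := hS
  obtain ⟨G₀, hG₀⟩ := hrev
  have hT1 : T ≠ 1 := by simpa using hT 1 one_ne_zero
  have hT2 : T ≠ T⁻¹ := by
    intro h
    refine hT 2 two_ne_zero ?_
    have h2 : T * T = 1 := by nth_rewrite 2 [h]; exact mul_inv_cancel T
    rw [show (2:ℤ) = 1 + 1 by norm_num, zpow_add, zpow_one, h2]
  have invol : ∀ G : X ≃ₜ X, G * T * G⁻¹ = T⁻¹ → G * G = 1 :=
    fun G hG => reversor_sq hT e hG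
  refine ⟨fun G hG => by rw [pow_two]; exact invol G hG, ?_⟩
  -- the reversing symmetry group
  let R : Subgroup (X ≃ₜ X) :=
          { carrier := {G : X ≃ₜ X | G * T * G⁻¹ = T ∨ G * T * G⁻¹ = T⁻¹}
            one_mem' := Or.inl (by group)
            mul_mem' := by
              intro a b ha hb
              have key : a * b * T * (a * b)⁻¹ = a * (b * T * b⁻¹) * a⁻¹ := by group
              rcases ha with ha | ha <;> rcases hb with hb | hb
              · exact Or.inl (by rw [key, hb, ha])
              · exact Or.inr (by rw [key, hb]; exact conj_inv_eq ha)
              · exact Or.inr (by rw [key, hb, ha])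
              · refine Or.inl ?_
                rw [key, hb]
                have := conj_inv_eq ha
                rwa [inv_inv] at this
            inv_mem' := by
              intro a ha
              rcases ha with ha | ha
              · exact Or.inl (by rw [inv_inv]; exact inv_conj_eq ha)
              · refine Or.inr ?_
                rw [inv_inv]
                have := inv_conj_eq (conj_inv_eq ha)
                rwa [inv_inv] at this }
  refine ⟨R, rfl, ?_⟩
  -- notation
  have hG₀2 : G₀ * G₀ = 1 := invol G₀ hG₀
  have hG₀inv : G₀⁻¹ = G₀ := inv_eq_of_mul_eq_one_left hG₀2
  have hinv : ∀ s ∈ Subgroup.centralizer ({T} : Set (X ≃ₜ X)), G₀ * s * G₀⁻¹ = s⁻¹ :=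
    fun s hs => reversor_inverts hT1 e hG₀ hs
  have hswap : ∀ s ∈ Subgroup.centralizer ({T} : Set (X ≃ₜ X)), s * G₀ = G₀ * s⁻¹ := by
    intro s hs
    have h1 := hinv s⁻¹ (inv_mem hs)
    rw [inv_inv] at h1
    exact (mul_inv_eq_iff_eq_mul.mp h1).symm
  have hrevS : ∀ {g : X ≃ₜ X}, g * T * g⁻¹ = T⁻¹ → G₀ * g ∈ Subgroup.centralizer ({T} : Set (X ≃ₜ X)) := by
    intro g hg
    rw [← conj_mem_iff]
    have key : (G₀ * g) * T * (G₀ * g)⁻¹ = G₀ * (g * T * g⁻¹) * G₀⁻¹ := by group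
    rw [key, hg]
    have := conj_inv_eq hG₀
    rwa [inv_inv] at this
  -- building blocks
  set S := Subgroup.centralizer ({T} : Set (X ≃ₜ X)) with hSdef
  let s_ : ℤ → (X ≃ₜ X) := fun i => ((e.symm (Multiplicative.ofAdd i)) : X ≃ₜ X)
  have s_mem : ∀ i : ℤ, s_ i ∈ S := fun i => (e.symm (Multiplicative.ofAdd i)).2
  have s_add : ∀ i j : ℤ, s_ (i + j) = s_ i * s_ j := by
    intro i j
    show ((e.symm (Multiplicative.ofAdd (i+j)) : S) : X ≃ₜ X) = _
    rw [ofAdd_add, map_mul]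
    rfl
  have s_neg : ∀ i : ℤ, s_ (-i) = (s_ i)⁻¹ := by
    intro i
    show ((e.symm (Multiplicative.ofAdd (-i)) : S) : X ≃ₜ X) = _
    rw [ofAdd_neg, map_inv]
    rfl
  have hmemR : ∀ x : DihedralGroup 0, (match x with
      | DihedralGroup.r i => s_ i
      | DihedralGroup.sr i => G₀ * s_ i) * T * (match x with
      | DihedralGroup.r i => s_ i
      | DihedralGroup.sr i => G₀ * s_ i)⁻¹ = T ∨ (match x with
      | DihedralGroup.r i => s_ i
      | DihedralGroup.sr i => G₀ * s_ i) * T * (match x with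
      | DihedralGroup.r i => s_ i
      | DihedralGroup.sr i => G₀ * s_ i)⁻¹ = T⁻¹ := by
    rintro (i | i)
    · exact Or.inl ((conj_mem_iff T (s_ i)).mpr (s_mem i))
    · refine Or.inr ?_
      have key : (G₀ * s_ i) * T * (G₀ * s_ i)⁻¹ = G₀ * (s_ i * T * (s_ i)⁻¹) * G₀⁻¹ := by group
      rw [key, (conj_mem_iff T (s_ i)).mpr (s_mem i), hG₀]
  have hG₀S : G₀ ∉ S := by
    intro h
    exact hT2 (((conj_mem_iff T G₀).mpr h).symm.trans hG₀)
  let ψ : DihedralGroup 0 → R := fun x =>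
    ⟨match x with
      | DihedralGroup.r i => s_ i
      | DihedralGroup.sr i => G₀ * s_ i, hmemR x⟩
  have hmul : ∀ x y : DihedralGroup 0, ψ (x * y) = ψ x * ψ y := by
    rintro (i | i) (j | j) <;>
      simp only [DihedralGroup.r_mul_r, DihedralGroup.r_mul_sr, DihedralGroup.sr_mul_r,
        DihedralGroup.sr_mul_sr] <;>
      apply Subtype.ext
    · show s_ (i + j) = s_ i * s_ j
      exact s_add i j
    · suffices key : ∀ i j : ℤ, G₀ * s_ (j - i) = s_ i * (G₀ * s_ j) from key i j
      intro i j
      rw [show s_ i * (G₀ * s_ j) = (s_ i * G₀) * s_ j from (mul_assoc _ _ _).symm,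
        hswap _ (s_mem i), ← s_neg, mul_assoc, ← s_add, show (-i + j : ℤ) = j - i by ring]
    · suffices key : ∀ i j : ℤ, G₀ * s_ (i + j) = (G₀ * s_ i) * s_ j from key i j
      intro i j
      rw [s_add, mul_assoc]
    · suffices key : ∀ i j : ℤ, s_ (j - i) = (G₀ * s_ i) * (G₀ * s_ j) from key i j
      intro i j
      rw [show (G₀ * s_ i) * (G₀ * s_ j) = G₀ * ((s_ i * G₀) * s_ j) by group,
        hswap _ (s_mem i),
        show G₀ * (G₀ * (s_ i)⁻¹ * s_ j) = (G₀ * G₀) * ((s_ i)⁻¹ * s_ j) by group,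
        hG₀2, one_mul, ← s_neg, ← s_add, show (-i + j : ℤ) = j - i by ring]
  have s_inj : ∀ i j : ℤ, s_ i = s_ j → i = j := by
    intro i j h
    have h1 : e.symm (Multiplicative.ofAdd i) = e.symm (Multiplicative.ofAdd j) :=
      Subtype.ext h
    have h2 := e.symm.injective h1
    exact congrArg Multiplicative.toAdd h2
  have hinj : Function.Injective ψ := by
    rintro (i | i) (j | j) h
    · have h' : s_ i = s_ j := congrArg (fun z : R => (z : X ≃ₜ X)) h
      exact congrArg DihedralGroup.r (s_inj i j h')
    · have h' : s_ i = G₀ * s_ j := congrArg (fun z : R => (z : X ≃ₜ X)) h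
      exfalso
      refine hG₀S ?_
      rw [show G₀ = s_ i * (s_ j)⁻¹ by rw [h']; group]
      exact mul_mem (s_mem i) (inv_mem (s_mem j))
    · have h' : G₀ * s_ i = s_ j := congrArg (fun z : R => (z : X ≃ₜ X)) h
      exfalso
      refine hG₀S ?_
      rw [show G₀ = s_ j * (s_ i)⁻¹ by rw [← h']; group]
      exact mul_mem (s_mem j) (inv_mem (s_mem i))
    · have h' : G₀ * s_ i = G₀ * s_ j := congrArg (fun z : R => (z : X ≃ₜ X)) h
      exact congrArg DihedralGroup.sr (s_inj i j (mul_left_cancel h'))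
  have hsurj : Function.Surjective ψ := by
    rintro ⟨g, hg⟩
    have hg' : g * T * g⁻¹ = T ∨ g * T * g⁻¹ = T⁻¹ := hg
    rcases hg' with hg' | hg'
    · refine ⟨DihedralGroup.r (e ⟨g, (conj_mem_iff T g).mp hg'⟩).toAdd, ?_⟩
      apply Subtype.ext
      show ((e.symm (Multiplicative.ofAdd _) : S) : X ≃ₜ X) = g
      rw [ofAdd_toAdd, MulEquiv.symm_apply_apply]
    · refine ⟨DihedralGroup.sr (e ⟨G₀ * g, hrevS hg'⟩).toAdd, ?_⟩
      apply Subtype.ext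
      show G₀ * ((e.symm (Multiplicative.ofAdd _) : S) : X ≃ₜ X) = g
      rw [ofAdd_toAdd, MulEquiv.symm_apply_apply]
      show G₀ * (G₀ * g) = g
      rw [← mul_assoc, hG₀2, one_mul]
  exact ⟨(MulEquiv.ofBijective (MonoidHom.mk' ψ hmul) ⟨hinj, hsurj⟩).symm⟩
end

section
/- Let X be a topological space and T ∈ Aut(X) of infinite order which is reversible, i.e. admits at least one reversor. If every reversor of T is an involution (every G with G∘T∘G⁻¹ = T⁻¹ satisfies G² = id), then the symmetry group S(X,T) is abelian. -/
section Reversor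

variable {G : Type*} [Group G]

theorem reversor_mul_of_commute {r t g : G} (hr : r * t * r⁻¹ = t⁻¹)
    (hg : Commute g t) : r * g * t * (r * g)⁻¹ = t⁻¹ :=
  calc r * g * t * (r * g)⁻¹ = r * (g * t * g⁻¹) * r⁻¹ := by group
    _ = t⁻¹ := by rw [hg.mul_inv_cancel, hr]

theorem conj_eq_inv_of_sq_eq_one {r g : G} (hr : r ^ 2 = 1) (hrg : (r * g) ^ 2 = 1) :
    r * g * r⁻¹ = g⁻¹ := by
  have hr_inv : r⁻¹ = r := inv_eq_of_mul_eq_one_right (by rwa [sq] at hr)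
  rw [hr_inv]
  exact eq_inv_of_mul_eq_one_left (by rwa [sq, ← mul_assoc] at hrg)

theorem commute_of_conj_eq_inv {r g h : G} (hg : r * g * r⁻¹ = g⁻¹) (hh : r * h * r⁻¹ = h⁻¹)
    (hgh : r * (g * h) * r⁻¹ = (g * h)⁻¹) : Commute g h := by
  have h_inv_mul : h⁻¹ * g⁻¹ = g⁻¹ * h⁻¹ := by
    rw [← mul_inv_rev, ← hgh, ← hg, ← hh]
    group
  exact Commute.inv_inv_iff.mp h_inv_mul.symm

end Reversor

theorem stmt6_general {X : Type*} [TopologicalSpace X] (T : X ≃ₜ X)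
    (hrev : ∃ G : X ≃ₜ X, G * T * G⁻¹ = T⁻¹)
    (hinv : ∀ G : X ≃ₜ X, G * T * G⁻¹ = T⁻¹ → G ^ 2 = 1) :
    ∀ g ∈ Subgroup.centralizer ({T} : Set (X ≃ₜ X)),
      ∀ h ∈ Subgroup.centralizer ({T} : Set (X ≃ₜ X)), g * h = h * g := by
  obtain ⟨R, hR⟩ := hrev
  have conj_eq_inv : ∀ g ∈ Subgroup.centralizer ({T} : Set (X ≃ₜ X)), R * g * R⁻¹ = g⁻¹ :=
    fun g hg => conj_eq_inv_of_sq_eq_one (hinv R hR) <| hinv _ <|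
      reversor_mul_of_commute hR (Subgroup.mem_centralizer_singleton_iff.mp hg)
  intro g hg h hh
  exact commute_of_conj_eq_inv (conj_eq_inv g hg) (conj_eq_inv h hh)
    (conj_eq_inv _ (mul_mem hg hh))

/-- If $T$ has infinite order, is reversible, and all reversors of $T$ are
involutions, then the symmetry group $S(X,T)$ is abelian. -/
theorem stmt6 {X : Type*} [TopologicalSpace X] (T : X ≃ₜ X)
    (hT : ∀ n : ℤ, n ≠ 0 → T ^ n ≠ 1)
    (hrev : ∃ G : X ≃ₜ X, G * T * G⁻¹ = T⁻¹)
    (hinv : ∀ G : X ≃ₜ X, G * T * G⁻¹ = T⁻¹ → G ^ 2 = 1) :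
    ∀ g ∈ Subgroup.centralizer ({T} : Set (X ≃ₜ X)),
      ∀ h ∈ Subgroup.centralizer ({T} : Set (X ≃ₜ X)), g * h = h * g :=
  stmt6_general T hrev hinv
end

section
/- Let M ∈ GL(d,ℤ) have characteristic polynomial P(x) that is irreducible over ℚ and possesses at least one real root (which is automatic when d is odd). Then every element of finite order in the centraliser {G ∈ GL(d,ℤ) : GM = MG} equals I or −I; in other words, the torsion subgroup of the centraliser of M is {±I} ≅ C₂. -/
set_option maxHeartbeats 1000000
set_option synthInstance.maxHeartbeats 400000

open Polynomial Matrix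

/-- A real number whose `n`-th power (`n ≠ 0`) is one is `1` or `-1`. -/
lemma real_pow_eq_one_aux {x : ℝ} {n : ℕ} (hn : n ≠ 0) (hx : x ^ n = 1) :
    x = 1 ∨ x = -1 := by
  have habs : |x| ^ n = 1 := by rw [← abs_pow, hx, abs_one]
  have h1 : |x| = 1 := by
    rcases lt_trichotomy |x| 1 with h | h | h
    · have := pow_lt_one₀ (abs_nonneg x) h hn
      rw [habs] at this; exact absurd this (lt_irrefl 1)
    · exact h
    · have := one_lt_pow₀ h hn
      rw [habs] at this; exact absurd this (lt_irrefl 1)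
  exact (abs_eq (by norm_num : (0:ℝ) ≤ 1)).mp h1

/-- If `M ∈ GL(d,ℤ)` has characteristic polynomial irreducible over `ℚ` with
at least one real root, then every finite-order element of the centraliser of
`M` in `GL(d,ℤ)` is `I` or `-I`. -/
theorem stmt9 {d : ℕ} (M : GL (Fin d) ℤ)
    (hirr : Irreducible
      (((M : Matrix (Fin d) (Fin d) ℤ).charpoly).map (Int.castRingHom ℚ)))
    (hreal : ∃ r : ℝ, Polynomial.eval r
      (((M : Matrix (Fin d) (Fin d) ℤ).charpoly).map (Int.castRingHom ℝ)) = 0) :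
    ∀ G ∈ Subgroup.centralizer ({M} : Set (GL (Fin d) ℤ)),
      IsOfFinOrder G → G = 1 ∨ G = -1 := by
  classical
  intro G hG hfin
  obtain ⟨r, hr⟩ := hreal
  -- the rational characteristic polynomial
  set P : ℚ[X] := ((M : Matrix (Fin d) (Fin d) ℤ).charpoly).map (Int.castRingHom ℚ) with hP
  have hPmonic : P.Monic :=
    ((M : Matrix (Fin d) (Fin d) ℤ).charpoly_monic).map _
  -- d is positive
  have hPdeg : P.natDegree = d := by
    rw [hP, (Matrix.charpoly_monic _).natDegree_map,
      Matrix.charpoly_natDegree_eq_dim, Fintype.card_fin]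
  have hd : 0 < d := by
    rcases Nat.eq_zero_or_pos d with h | h
    · exfalso
      apply hirr.not_isUnit
      rw [Polynomial.eq_one_of_monic_natDegree_zero hPmonic (by omega)]
      exact isUnit_one
    · exact h
  haveI : Nonempty (Fin d) := ⟨⟨0, hd⟩⟩
  -- the rational matrices of M and G
  set Aq : Matrix (Fin d) (Fin d) ℚ :=
    (M : Matrix (Fin d) (Fin d) ℤ).map (Int.castRingHom ℚ) with hAq
  set Bq : Matrix (Fin d) (Fin d) ℚ :=
    (G : Matrix (Fin d) (Fin d) ℤ).map (Int.castRingHom ℚ) with hBq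
  have hPA : Aq.charpoly = P := by
    rw [hAq, hP, Matrix.charpoly_map]
  -- linear maps
  set e := Matrix.toLinAlgEquiv' (R := ℚ) (n := Fin d)
  set f : Module.End ℚ (Fin d → ℚ) := e Aq with hf
  set g : Module.End ℚ (Fin d → ℚ) := e Bq with hg
  -- G commutes with M
  have hcommZ : (G : Matrix (Fin d) (Fin d) ℤ) * (M : Matrix (Fin d) (Fin d) ℤ)
      = (M : Matrix (Fin d) (Fin d) ℤ) * (G : Matrix (Fin d) (Fin d) ℤ) := by
    have := Subgroup.mem_centralizer_iff.mp hG M (Set.mem_singleton M)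
    calc (G : Matrix (Fin d) (Fin d) ℤ) * (M : Matrix (Fin d) (Fin d) ℤ)
        = ((G * M : GL (Fin d) ℤ) : Matrix (Fin d) (Fin d) ℤ) := rfl
      _ = ((M * G : GL (Fin d) ℤ) : Matrix (Fin d) (Fin d) ℤ) := by rw [this]
      _ = _ := rfl
  have hcommQ : Bq * Aq = Aq * Bq := by
    rw [hAq, hBq, ← Matrix.map_mul, ← Matrix.map_mul, hcommZ]
  have hcomm : g * f = f * g := by
    rw [hf, hg, ← _root_.map_mul, ← _root_.map_mul, hcommQ]
  -- Cayley–Hamilton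
  have hP0 : Polynomial.aeval f P = 0 := by
    have h1 := Polynomial.aeval_algHom_apply e Aq P
    rw [hf, h1, ← hPA, Matrix.aeval_self_charpoly, _root_.map_zero]
  -- the field F = ℚ[x]/(P)
  haveI : Fact (Irreducible P) := ⟨hirr⟩
  set F := AdjoinRoot P with hF
  have hPne : P ≠ 0 := hPmonic.ne_zero
  -- algebra morphism F → End
  have hker : ∀ a ∈ Ideal.span ({P} : Set ℚ[X]), (Polynomial.aeval f) a = 0 := by
    intro a ha
    obtain ⟨b, rfl⟩ := Ideal.mem_span_singleton'.mp ha
    rw [_root_.map_mul, hP0, mul_zero]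
  set φ : F →ₐ[ℚ] Module.End ℚ (Fin d → ℚ) :=
    Ideal.Quotient.liftₐ (Ideal.span ({P} : Set ℚ[X])) (Polynomial.aeval f) hker with hφ
  have hφmk : ∀ p : ℚ[X], φ (AdjoinRoot.mk P p) = Polynomial.aeval f p := by
    intro p
    show Ideal.Quotient.liftₐ (Ideal.span ({P} : Set ℚ[X])) (Polynomial.aeval f) hker
      (Ideal.Quotient.mk _ p) = Polynomial.aeval f p
    rw [Ideal.Quotient.liftₐ_apply]
    exact Ideal.Quotient.lift_mk (Ideal.span ({P} : Set ℚ[X])) _ _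
  letI : Module F (Fin d → ℚ) := Module.compHom (Fin d → ℚ) (φ : F →+* Module.End ℚ (Fin d → ℚ))
  have hsmul : ∀ (a : F) (v : Fin d → ℚ), a • v = φ a v := fun _ _ => rfl
  haveI : IsScalarTower ℚ F (Fin d → ℚ) := by
    constructor
    intro q a v
    rw [hsmul, hsmul, _root_.map_smul]
    rfl
  -- dimensions
  have hrankF : Module.finrank ℚ F = d := by
    rw [(AdjoinRoot.powerBasis hPne).finrank, AdjoinRoot.powerBasis_dim, hPdeg]
  have hrankV : Module.finrank ℚ (Fin d → ℚ) = d := by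
    simp [Module.finrank_pi]
  have hrank1 : Module.finrank F (Fin d → ℚ) = 1 := by
    have := Module.finrank_mul_finrank ℚ F (Fin d → ℚ)
    rw [hrankF, hrankV] at this
    exact Nat.eq_of_mul_eq_mul_left hd (this.trans (mul_one d).symm)
  -- g commutes with every φ a
  have hgφ : ∀ a : F, g * φ a = φ a * g := by
    intro a
    induction a using AdjoinRoot.induction_on with
    | ih p =>
      rw [hφmk]
      have h1 : Polynomial.aeval f p ∈ Algebra.adjoin ℚ ({f} : Set (Module.End ℚ (Fin d → ℚ))) :=
        Polynomial.aeval_mem_adjoin_singleton ℚ f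
      exact (Algebra.commute_of_mem_adjoin_singleton_of_commute h1 hcomm).eq
  have hgsmul : ∀ (a : F) (v : Fin d → ℚ), g (a • v) = a • g v := by
    intro a v
    rw [hsmul, hsmul]
    have := congrFun (congrArg DFunLike.coe (hgφ a)) v
    exact this
  -- V is a one-dimensional F-vector space
  obtain ⟨v, hv0, hvgen⟩ := finrank_eq_one_iff'.mp hrank1
  obtain ⟨c, hc⟩ := hvgen (g v)
  -- g equals scalar multiplication by c, i.e. g = φ c
  have hgc : g = φ c := by
    apply LinearMap.ext
    intro w
    obtain ⟨a, ha⟩ := hvgen w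
    rw [← ha, hgsmul, ← hc, ← hsmul c, smul_smul, smul_smul, mul_comm a c]
  -- torsion: c ^ n = 1 in F
  obtain ⟨n, hn, hGn⟩ := isOfFinOrder_iff_pow_eq_one.mp hfin
  have hgn : g ^ n = 1 := by
    have h1 : ((G ^ n : GL (Fin d) ℤ) : Matrix (Fin d) (Fin d) ℤ)
        = (G : Matrix (Fin d) (Fin d) ℤ) ^ n := Units.val_pow_eq_pow_val G n
    rw [hGn] at h1
    rw [Units.val_one] at h1
    have h2 : Bq ^ n = 1 := by
      have h3 : (Int.castRingHom ℚ).mapMatrix ((G : Matrix (Fin d) (Fin d) ℤ) ^ n)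
          = ((Int.castRingHom ℚ).mapMatrix (G : Matrix (Fin d) (Fin d) ℤ)) ^ n :=
        _root_.map_pow _ _ _
      rw [← h1, _root_.map_one] at h3
      rw [hBq, ← RingHom.mapMatrix_apply, ← h3]
    rw [hg, ← _root_.map_pow, h2, _root_.map_one]
  haveI : Nontrivial (Module.End ℚ (Fin d → ℚ)) := by
    refine ⟨1, 0, fun h => ?_⟩
    have hv : (1 : Module.End ℚ (Fin d → ℚ)) v = 0 := by rw [h]; rfl
    exact hv0 hv
  have hφinj : Function.Injective φ := φ.toRingHom.injective
  have hcn : c ^ n = 1 := by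
    apply hφinj
    rw [_root_.map_pow, ← hgc, hgn, _root_.map_one]
  -- embed F into ℝ
  have hrP : Polynomial.aeval r P = 0 := by
    rw [Polynomial.aeval_def, Polynomial.eval₂_eq_eval_map, hP, Polynomial.map_map]
    have : (algebraMap ℚ ℝ).comp (Int.castRingHom ℚ) = Int.castRingHom ℝ :=
      Subsingleton.elim _ _
    rw [this]
    exact hr
  set ψ : F →ₐ[ℚ] ℝ := AdjoinRoot.liftAlgHom P (Algebra.ofId ℚ ℝ) r hrP with hψ
  have hψn : (ψ c) ^ n = 1 := by rw [← _root_.map_pow, hcn, _root_.map_one]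
  have hψinj : Function.Injective ψ := ψ.toRingHom.injective
  have hc1 : c = 1 ∨ c = -1 := by
    rcases real_pow_eq_one_aux hn.ne' hψn with h | h
    · left; apply hψinj; rw [h, _root_.map_one]
    · right; apply hψinj; rw [h, _root_.map_neg, _root_.map_one]
  -- conclude
  have hBq1 : Bq = 1 ∨ Bq = -1 := by
    rcases hc1 with h | h
    · left
      have : g = 1 := by rw [hgc, h, _root_.map_one]
      have := e.injective (by rw [← hg, this, _root_.map_one] : e Bq = e 1)
      exact this
    · right
      have : g = -1 := by rw [hgc, h, _root_.map_neg, _root_.map_one]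
      have := e.injective (by rw [← hg, this, _root_.map_neg, _root_.map_one] : e Bq = e (-1))
      exact this
  have hmapinj : Function.Injective
      (fun N : Matrix (Fin d) (Fin d) ℤ => N.map (Int.castRingHom ℚ)) := by
    intro N₁ N₂ h
    ext i j
    have h2 : N₁.map (Int.castRingHom ℚ) = N₂.map (Int.castRingHom ℚ) := h
    have h3 := congrFun (congrFun h2 i) j
    simp only [Matrix.map_apply] at h3
    exact Int.cast_injective h3
  rcases hBq1 with h | h
  · left
    apply Units.ext
    apply hmapinj
    show Bq = (1 : Matrix (Fin d) (Fin d) ℤ).map (Int.castRingHom ℚ)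
    rw [h]; simp [Matrix.map_one]
  · right
    apply Units.ext
    apply hmapinj
    show Bq = ((-1 : GL (Fin d) ℤ) : Matrix (Fin d) (Fin d) ℤ).map (Int.castRingHom ℚ)
    rw [h]
    have hneg : ((-1 : GL (Fin d) ℤ) : Matrix (Fin d) (Fin d) ℤ) = -1 := by
      simp
    rw [hneg]
    ext i j
    by_cases hij : i = j <;>
      simp [Matrix.map_apply, Matrix.neg_apply, Matrix.one_apply, hij]
end

section
/- Let M ∈ GL(d,ℤ) with d ≥ 2 have characteristic polynomial irreducible over ℚ. If d is odd, or if det(M) = −1, then M is not reversible in GL(d,ℤ): there is no G ∈ GL(d,ℤ) with G M G⁻¹ = M⁻¹. -/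
open Polynomial Matrix

lemma my_charpoly_conj {n R : Type*} [CommRing R] [DecidableEq n] [Fintype n]
    (P : (Matrix n n R)ˣ) (A : Matrix n n R) :
    ((P : Matrix n n R) * A * (↑P⁻¹ : Matrix n n R)).charpoly = A.charpoly := by
  have hcm : charmatrix ((P : Matrix n n R) * A * (↑P⁻¹ : Matrix n n R)) =
      (C : R →+* R[X]).mapMatrix (P : Matrix n n R) * charmatrix A *
        (C : R →+* R[X]).mapMatrix (↑P⁻¹ : Matrix n n R) := by
    have hPP : (C : R →+* R[X]).mapMatrix (P : Matrix n n R) *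
        (C : R →+* R[X]).mapMatrix (↑P⁻¹ : Matrix n n R) = 1 := by
      rw [← RingHom.map_mul, Units.mul_inv, RingHom.map_one]
    rw [charmatrix, charmatrix, mul_sub, sub_mul]
    congr 1
    · have hs : Matrix.scalar n (X : R[X]) = (X : R[X]) • (1 : Matrix n n R[X]) := by
        ext i j
        simp [Matrix.scalar, Matrix.smul_apply, Matrix.one_apply, Matrix.diagonal_apply]
      rw [hs, Matrix.mul_smul, mul_one, Matrix.smul_mul, hPP]
    · rw [RingHom.map_mul, RingHom.map_mul]
  rw [Matrix.charpoly, Matrix.charpoly, hcm, det_mul, det_mul]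
  have h1 : ((C : R →+* R[X]).mapMatrix (P : Matrix n n R)).det *
      ((C : R →+* R[X]).mapMatrix (↑P⁻¹ : Matrix n n R)).det = 1 := by
    rw [← det_mul, ← RingHom.map_mul, Units.mul_inv, RingHom.map_one, det_one]
  calc ((C : R →+* R[X]).mapMatrix (P : Matrix n n R)).det * (charmatrix A).det *
        ((C : R →+* R[X]).mapMatrix (↑P⁻¹ : Matrix n n R)).det
      = ((C : R →+* R[X]).mapMatrix (P : Matrix n n R)).det *
        ((C : R →+* R[X]).mapMatrix (↑P⁻¹ : Matrix n n R)).det * (charmatrix A).det := by ring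
    _ = (charmatrix A).det := by rw [h1, one_mul]

lemma my_eval_charpoly {n R : Type*} [CommRing R] [DecidableEq n] [Fintype n]
    (A : Matrix n n R) (r : R) :
    A.charpoly.eval r = (Matrix.scalar n r - A).det := by
  rw [Matrix.charpoly, _root_.eval_det, matPolyEquiv_charmatrix]
  congr 1
  simp

/-- If `M ∈ GL(d,ℤ)` (`d ≥ 2`) has characteristic polynomial irreducible over
`ℚ`, and `d` is odd or `det M = -1`, then `M` is not reversible in `GL(d,ℤ)`. -/
theorem stmt10 {d : ℕ} (hd : 2 ≤ d) (M : GL (Fin d) ℤ)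
    (hirr : Irreducible
      (((M : Matrix (Fin d) (Fin d) ℤ).charpoly).map (Int.castRingHom ℚ)))
    (h : Odd d ∨ (M : Matrix (Fin d) (Fin d) ℤ).det = -1) :
    ¬ ∃ G : GL (Fin d) ℤ, G * M * G⁻¹ = M⁻¹ := by
  rintro ⟨G, hG⟩
  set A : Matrix (Fin d) (Fin d) ℤ := (M : Matrix (Fin d) (Fin d) ℤ) with hA
  set B : Matrix (Fin d) (Fin d) ℤ := ((M⁻¹ : GL (Fin d) ℤ) : Matrix (Fin d) (Fin d) ℤ)
    with hB
  have hAB : A * B = 1 := by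
    rw [hA, hB, ← Units.val_mul, mul_inv_cancel, Units.val_one]
  have hBconj : B = (↑G : Matrix (Fin d) (Fin d) ℤ) * A * (↑G⁻¹ : Matrix (Fin d) (Fin d) ℤ) := by
    rw [hB, ← hG]
    simp [Units.val_mul, hA]
  have hcp : B.charpoly = A.charpoly := by
    rw [hBconj]
    exact my_charpoly_conj G A
  -- key determinant identities
  have hsc1 : (Matrix.scalar (Fin d) (1 : ℤ)) = (1 : Matrix (Fin d) (Fin d) ℤ) := by
    ext i j; simp [Matrix.scalar, Matrix.one_apply, Matrix.diagonal_apply]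
  have hscneg : (Matrix.scalar (Fin d) (-1 : ℤ)) = -(1 : Matrix (Fin d) (Fin d) ℤ) := by
    ext i j; simp [Matrix.scalar, Matrix.one_apply, Matrix.diagonal_apply]
  have hev1A : A.charpoly.eval 1 = (1 - A).det := by rw [my_eval_charpoly, hsc1]
  have hev1B : B.charpoly.eval 1 = (1 - B).det := by rw [my_eval_charpoly, hsc1]
  have hevmA : A.charpoly.eval (-1) = (-1 : ℤ) ^ d * (1 + A).det := by
    rw [my_eval_charpoly, hscneg]
    have : -(1 : Matrix (Fin d) (Fin d) ℤ) - A = (-1 : ℤ) • (1 + A) := by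
      rw [neg_smul, one_smul, neg_add]; abel
    rw [this, det_smul]
    simp
  have hevmB : B.charpoly.eval (-1) = (-1 : ℤ) ^ d * (1 + B).det := by
    rw [my_eval_charpoly, hscneg]
    have : -(1 : Matrix (Fin d) (Fin d) ℤ) - B = (-1 : ℤ) • (1 + B) := by
      rw [neg_smul, one_smul, neg_add]; abel
    rw [this, det_smul]
    simp
  -- relation between det(1-B), det(1+B) and det(1-A), det(1+A)
  have hrel1 : A.det * (1 - B).det = (-1 : ℤ) ^ d * (1 - A).det := by
    rw [← det_mul]
    have : A * (1 - B) = A - 1 := by rw [mul_sub, hAB, mul_one]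
    rw [this]
    have : A - 1 = (-1 : ℤ) • (1 - A) := by rw [neg_smul, one_smul, neg_sub]
    rw [this, det_smul]
    simp
  have hrel2 : A.det * (1 + B).det = (1 + A).det := by
    rw [← det_mul]
    have : A * (1 + B) = 1 + A := by rw [mul_add, hAB, mul_one, add_comm]
    rw [this]
  -- from charpoly equality
  have heq1 : (1 - B).det = (1 - A).det := by rw [← hev1A, ← hev1B, hcp]
  have heqm : (1 + B).det = (1 + A).det := by
    have := hcp ▸ hevmB
    rw [hevmA] at this
    have hne : ((-1 : ℤ) ^ d) ≠ 0 := by positivity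
    exact mul_left_cancel₀ hne this.symm
  -- get a root r ∈ {1, -1} of charpoly
  have hdetpm : A.det = 1 ∨ A.det = -1 := by
    have : IsUnit A.det := (Matrix.isUnit_iff_isUnit_det A).mp M.isUnit
    exact Int.isUnit_iff.mp this
  have hroot : A.charpoly.eval 1 = 0 ∨ A.charpoly.eval (-1) = 0 := by
    rcases h with hodd | hdet
    · have hpow : (-1 : ℤ) ^ d = -1 := Odd.neg_one_pow hodd
      rcases hdetpm with h1 | hm1
      · left
        rw [h1, one_mul, heq1, hpow] at hrel1
        rw [hev1A]
        linarith
      · right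
        rw [hm1, heqm] at hrel2
        rw [hevmA]
        have : (1 + A).det = 0 := by linarith
        rw [this, mul_zero]
    · right
      rw [hdet, heqm] at hrel2
      rw [hevmA]
      have : (1 + A).det = 0 := by linarith
      rw [this, mul_zero]
  -- contradiction with irreducibility
  set q : ℚ[X] := A.charpoly.map (Int.castRingHom ℚ) with hq
  have hqdeg : q.natDegree = d := by
    rw [hq, (Matrix.charpoly_monic A).natDegree_map, Matrix.charpoly_natDegree_eq_dim,
      Fintype.card_fin]
  obtain ⟨r, hr⟩ : ∃ r : ℚ, q.IsRoot r := by
    rcases hroot with h0 | h0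
    · refine ⟨1, ?_⟩
      rw [hq, IsRoot, eval_map]
      show eval₂ (Int.castRingHom ℚ) ((Int.castRingHom ℚ) 1) A.charpoly = 0
      rw [eval₂_hom, h0, map_zero]
    · refine ⟨-1, ?_⟩
      rw [hq, IsRoot, eval_map]
      show eval₂ (Int.castRingHom ℚ) ((Int.castRingHom ℚ) (-1)) A.charpoly = 0
      rw [eval₂_hom, h0, map_zero]
  obtain ⟨c, hc⟩ := (dvd_iff_isRoot.mpr hr)
  rcases hirr.isUnit_or_isUnit hc with hu | hu
  · exact not_isUnit_X_sub_C r hu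
  · have hc0 : c ≠ 0 := by
      intro h0
      rw [h0, mul_zero] at hc
      exact hirr.ne_zero hc
    have : q.natDegree = 1 := by
      rw [hc, natDegree_mul (X_sub_C_ne_zero r) hc0, natDegree_X_sub_C,
        natDegree_eq_zero_of_isUnit hu]
    omega
end

section
/- Let P ∈ ℤ[X] be a monic polynomial of degree d ≥ 2 with constant term ε = P(0) ∈ {1, −1}, and suppose P is self-reciprocal in the sense that X^d · P(1/X) = ε · P(X) (equivalently, the coefficient reversal of P equals ε·P). Then the companion matrix C of P lies in GL(d,ℤ), and C is reversible in GL(d,ℤ): there exists G ∈ GL(d,ℤ) with G C G⁻¹ = C⁻¹. -/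
/-!
Let `J` be the reversal (anti-diagonal) permutation matrix. Reversing the columns of the
companion matrix `C` of a self-reciprocal `P` gives an involution `C * J`: this is where
`P(0) = ±1` and the symmetry `c_{d-i} = c₀ cᵢ` of the coefficients enter. So `C = (C * J) * J` is
a product of two involutions, hence invertible and conjugate to its inverse by `J`.
-/

/-- The companion matrix of a monic integer polynomial `P` of degree `d`:
`1`'s on the subdiagonal, last column `(-c₀, …, -c_{d-1})ᵀ`, `0` elsewhere. -/
def companionMatrix (d : ℕ) (P : Polynomial ℤ) : Matrix (Fin d) (Fin d) ℤ :=
  Matrix.of fun i j =>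
    if (j : ℕ) = d - 1 then -P.coeff (i : ℕ)
    else if (i : ℕ) = (j : ℕ) + 1 then 1 else 0

open Polynomial

theorem exists_unit_and_conj_eq_inv_of_mul_self_eq_one {M : Type*} [Monoid M] {a j : M}
    (hj : j * j = 1) (haj : a * j * (a * j) = 1) :
    ∃ u : Mˣ, (u : M) = a ∧ ∃ g : Mˣ, g * u * g⁻¹ = u⁻¹ := by
  have inv_mul : j * a * j * a = 1 :=
    calc j * a * j * a = j * (a * j * (a * j)) * j := by simp only [mul_assoc, hj, mul_one]
      _ = 1 := by rw [haj, mul_one, hj]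
  refine ⟨⟨a, j * a * j, by simpa only [mul_assoc] using haj, inv_mul⟩, rfl,
    ⟨j, j, hj, hj⟩, Units.ext rfl⟩

theorem Polynomial.coeff_natDegree_sub_of_reverse_eq {R : Type*} [Semiring R] {P : R[X]}
    {ε : R} (hsr : P.reverse = C ε * P) {i : ℕ} (hi : i ≤ P.natDegree) :
    P.coeff (P.natDegree - i) = ε * P.coeff i := by
  simpa only [coeff_reverse, coeff_C_mul, revAt_le hi] using congrArg (coeff · i) hsr

theorem Fin.revPerm_permMatrix_mul_self (d : ℕ) (R : Type*) [NonAssocSemiring R] :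
    (Fin.revPerm : Equiv.Perm (Fin d)).permMatrix R * Fin.revPerm.permMatrix R = 1 := by
  rw [← Matrix.permMatrix_mul, show (Fin.revPerm : Equiv.Perm (Fin d)) * Fin.revPerm = 1 from
    Equiv.ext Fin.rev_rev, Matrix.permMatrix_one]

theorem Matrix.mul_revPerm_permMatrix {d : ℕ} {R : Type*} [NonAssocSemiring R]
    (A : Matrix (Fin d) (Fin d) R) :
    A * Fin.revPerm.permMatrix R = A.submatrix id Fin.rev := by
  rw [PEquiv.mul_toMatrix_toPEquiv, Fin.revPerm_symm]
  rfl

theorem companionMatrix_submatrix_rev_apply {d : ℕ} (P : ℤ[X]) (i j : Fin d) :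
    (companionMatrix d P).submatrix id Fin.rev i j =
      if (j : ℕ) = 0 then -P.coeff i else if (i : ℕ) + j = d then 1 else 0 := by
  have hj := j.isLt
  simp only [Matrix.submatrix_apply, id, companionMatrix, Matrix.of_apply, Fin.val_rev]
  congr 1 <;> grind

theorem companionMatrix_submatrix_rev_mul_self {d : ℕ} {P : ℤ[X]}
    (hc₀ : P.coeff 0 * P.coeff 0 = 1)
    (hsymm : ∀ i ≤ d, P.coeff (d - i) = P.coeff 0 * P.coeff i) :
    (companionMatrix d P).submatrix id Fin.rev * (companionMatrix d P).submatrix id Fin.rev =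
      1 := by
  ext i k
  have hi := i.isLt
  have hk := k.isLt
  simp only [Matrix.mul_apply, Matrix.one_apply, companionMatrix_submatrix_rev_apply]
  by_cases hk₀ : (k : ℕ) = 0
  · simp only [hk₀, if_true]
    by_cases hi₀ : (i : ℕ) = 0
    · rw [Finset.sum_eq_single ⟨0, by omega⟩] <;> grind
    · -- the two nonzero terms, `j = 0` and `j = d - i`, are `c₀ cᵢ` and `-c_{d-i}`
      have hsymm_i := hsymm i hi.le
      clear hsymm
      rw [← Finset.sum_subset (Finset.subset_univ {⟨0, by omega⟩, ⟨d - i, by omega⟩}),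
        Finset.sum_pair] <;> grind
  · rw [Finset.sum_eq_single ⟨d - k, by omega⟩] <;> grind

theorem stmt11_general {d : ℕ} (P : Polynomial ℤ)
    (hdeg : P.natDegree = d) (ε : ℤ) (hε : ε = P.coeff 0) (hεu : ε = 1 ∨ ε = -1)
    (hsr : P.reverse = Polynomial.C ε * P) :
    ∃ Cu : GL (Fin d) ℤ,
      (Cu : Matrix (Fin d) (Fin d) ℤ) = companionMatrix d P ∧
      ∃ G : GL (Fin d) ℤ, G * Cu * G⁻¹ = Cu⁻¹ := by
  subst hε hdeg
  have hc₀ : P.coeff 0 * P.coeff 0 = 1 := by rcases hεu with h | h <;> rw [h] <;> norm_num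
  have hsymm := fun i => coeff_natDegree_sub_of_reverse_eq (i := i) hsr
  refine exists_unit_and_conj_eq_inv_of_mul_self_eq_one
    (Fin.revPerm_permMatrix_mul_self P.natDegree ℤ) ?_
  rw [Matrix.mul_revPerm_permMatrix]
  exact companionMatrix_submatrix_rev_mul_self hc₀ hsymm

/-- If `P ∈ ℤ[X]` is monic of degree `d ≥ 2` with constant term `ε = ±1` and
is self-reciprocal (`X^d P(1/X) = ε P(X)`, i.e. `P.reverse = ε • P`), then its
companion matrix lies in `GL(d,ℤ)` and is reversible there. -/
theorem stmt11 {d : ℕ} (hd : 2 ≤ d) (P : Polynomial ℤ) (hmonic : P.Monic)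
    (hdeg : P.natDegree = d) (ε : ℤ) (hε : ε = P.coeff 0) (hεu : ε = 1 ∨ ε = -1)
    (hsr : P.reverse = Polynomial.C ε * P) :
    ∃ Cu : GL (Fin d) ℤ,
      (Cu : Matrix (Fin d) (Fin d) ℤ) = companionMatrix d P ∧
      ∃ G : GL (Fin d) ℤ, G * Cu * G⁻¹ = Cu⁻¹ :=
  stmt11_general P hdeg ε hε hεu hsr
end

section
/- Let A be a set with at least two elements (discrete topology), d ≥ 1, and X = A^(ℤ^d) the full d-dimensional shift with the product topology and shift maps (S_v x)(n) = x(n+v) for v ∈ ℤ^d. For M ∈ GL(d,ℤ) define h_M : X → X by (h_M x)(n) = x(M⁻¹ n). Then each h_M is a homeomorphism of X satisfying h_M ∘ S_v ∘ h_M⁻¹ = S_{Mv} for all v ∈ ℤ^d, and the normaliser of the shift group 𝒢 = {S_v : v ∈ ℤ^d} in Aut(X) decomposes as the internal semidirect product of the centraliser of 𝒢 with {h_M : M ∈ GL(d,ℤ)}: every G in the normaliser can be written uniquely as G = F ∘ h_M with F in the centraliser of 𝒢 and M ∈ GL(d,ℤ). Hence R(X) = S(X) ⋊ GL(d,ℤ).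 -/
/-- The shift `S_v`, `(S_v x)(n) = x(n+v)`, on the full shift `A^(ℤ^d)`. -/
def fullShift {d : ℕ} {A : Type*} [TopologicalSpace A] [DiscreteTopology A]
    (v : Fin d → ℤ) : ((Fin d → ℤ) → A) ≃ₜ ((Fin d → ℤ) → A) where
  toFun x n := x (n + v)
  invFun x n := x (n - v)
  left_inv x := by funext n; simp
  right_inv x := by funext n; simp
  continuous_toFun := continuous_pi fun n => continuous_apply _
  continuous_invFun := continuous_pi fun n => continuous_apply _

/-- The map `h_M`, `(h_M x)(n) = x(M⁻¹ n)`, on the full shift `A^(ℤ^d)`,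
for `M ∈ GL(d,ℤ)`. -/
def glAct {d : ℕ} {A : Type*} [TopologicalSpace A] [DiscreteTopology A]
    (M : GL (Fin d) ℤ) : ((Fin d → ℤ) → A) ≃ₜ ((Fin d → ℤ) → A) where
  toFun x n := x ((((M⁻¹ : GL (Fin d) ℤ) : Matrix (Fin d) (Fin d) ℤ)).mulVec n)
  invFun x n := x (((M : Matrix (Fin d) (Fin d) ℤ)).mulVec n)
  left_inv x := by
    funext n
    simp [Matrix.mulVec_mulVec]
  right_inv x := by
    funext n
    simp [Matrix.mulVec_mulVec]
  continuous_toFun := continuous_pi fun n => continuous_apply _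
  continuous_invFun := continuous_pi fun n => continuous_apply _


section aux
variable {d : ℕ} {A : Type*} [TopologicalSpace A] [DiscreteTopology A]

lemma fullShift_apply (v : Fin d → ℤ) (x : (Fin d → ℤ) → A) (n : Fin d → ℤ) :
    fullShift v x n = x (n + v) := rfl

lemma fullShift_mul (v w : Fin d → ℤ) :
    fullShift (A := A) v * fullShift w = fullShift (v + w) := by
  refine Homeomorph.ext fun x => ?_
  funext n
  show x (n + v + w) = x (n + (v + w))
  rw [add_assoc]

lemma fullShift_zero : fullShift (A := A) (d := d) 0 = 1 := by
  refine Homeomorph.ext fun x => ?_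
  funext n
  show x (n + 0) = x n
  rw [add_zero]

lemma fullShift_inv (v : Fin d → ℤ) :
    (fullShift (A := A) v)⁻¹ = fullShift (-v) := by
  refine Homeomorph.ext fun x => ?_
  funext n
  show x (n - v) = x (n + -v)
  rw [sub_eq_add_neg]

lemma fullShift_injective [Nontrivial A] :
    Function.Injective (fullShift (A := A) (d := d)) := by
  intro v w h
  obtain ⟨a, b, hab⟩ := exists_pair_ne A
  by_contra hvw
  classical
  have hx : fullShift (A := A) v (fun m => if m = v then a else b) 0
      = fullShift (A := A) w (fun m => if m = v then a else b) 0 := by rw [h]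
  rw [fullShift_apply, fullShift_apply, zero_add, zero_add,
    if_pos rfl, if_neg (fun e => hvw e.symm)] at hx
  exact hab hx

/-- The shift group as an explicit subgroup. -/
def shiftGroup (d : ℕ) (A : Type*) [TopologicalSpace A] [DiscreteTopology A] :
    Subgroup (((Fin d → ℤ) → A) ≃ₜ ((Fin d → ℤ) → A)) where
  carrier := Set.range (fullShift (d := d) (A := A))
  one_mem' := ⟨0, fullShift_zero⟩
  mul_mem' := by rintro _ _ ⟨v, rfl⟩ ⟨w, rfl⟩; exact ⟨v + w, (fullShift_mul v w).symm⟩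
  inv_mem' := by rintro _ ⟨v, rfl⟩; exact ⟨-v, (fullShift_inv v).symm⟩

lemma closure_range_eq :
    Subgroup.closure (Set.range (fullShift (d := d) (A := A))) = shiftGroup d A :=
  le_antisymm ((Subgroup.closure_le _).2 Set.Subset.rfl)
    fun _ hg => Subgroup.subset_closure hg

lemma mulVec_inv_cancel (M : GL (Fin d) ℤ) (w : Fin d → ℤ) :
    (M : Matrix (Fin d) (Fin d) ℤ).mulVec
      (((M⁻¹ : GL (Fin d) ℤ) : Matrix (Fin d) (Fin d) ℤ).mulVec w) = w := by
  rw [Matrix.mulVec_mulVec, ← Units.val_mul, mul_inv_cancel, Units.val_one,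
    Matrix.one_mulVec]

lemma glAct_conj (M : GL (Fin d) ℤ) (v : Fin d → ℤ) :
    glAct (A := A) M * fullShift v * (glAct M)⁻¹ =
      fullShift ((M : Matrix (Fin d) (Fin d) ℤ).mulVec v) := by
  refine Homeomorph.ext fun x => ?_
  funext n
  show x ((M : Matrix (Fin d) (Fin d) ℤ).mulVec
      (((M⁻¹ : GL (Fin d) ℤ) : Matrix (Fin d) (Fin d) ℤ).mulVec n + v))
    = x (n + (M : Matrix (Fin d) (Fin d) ℤ).mulVec v)
  rw [Matrix.mulVec_add, mulVec_inv_cancel]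

lemma addHom_mulVec (f : (Fin d → ℤ) →+ (Fin d → ℤ)) (v : Fin d → ℤ) :
    (Matrix.of fun i j => f (Pi.single j 1) i).mulVec v = f v := by
  classical
  have hv : v = ∑ j, (v j) • Pi.single j (1 : ℤ) := by
    conv_lhs => rw [← Finset.univ_sum_single v]
    refine Finset.sum_congr rfl fun j _ => ?_
    funext k
    by_cases hk : k = j <;> simp [Pi.single_apply, hk]
  funext i
  simp only [Matrix.mulVec, dotProduct, Matrix.of_apply]
  conv_rhs => rw [hv]
  rw [map_sum, Finset.sum_apply]
  refine Finset.sum_congr rfl fun j _ => ?_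
  rw [map_zsmul, Pi.smul_apply, smul_eq_mul, mul_comm]

lemma matrix_ext_of_mulVec {P Q : Matrix (Fin d) (Fin d) ℤ}
    (h : ∀ v, P.mulVec v = Q.mulVec v) : P = Q := by
  classical
  ext i j
  have := congrFun (h (Pi.single j 1)) i
  simpa using this

lemma central_conj {F : ((Fin d → ℤ) → A) ≃ₜ ((Fin d → ℤ) → A)}
    (hF : F ∈ Subgroup.centralizer
      ((Subgroup.closure (Set.range (fullShift (d := d) (A := A)))) : Set _))
    (M : GL (Fin d) ℤ) (v : Fin d → ℤ) :
    (F * glAct (A := A) M) * fullShift v * (F * glAct M)⁻¹ =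
      fullShift ((M : Matrix (Fin d) (Fin d) ℤ).mulVec v) := by
  have h2 : fullShift ((M : Matrix (Fin d) (Fin d) ℤ).mulVec v) * F =
      F * fullShift ((M : Matrix (Fin d) (Fin d) ℤ).mulVec v) :=
    hF _ (Subgroup.subset_closure ⟨_, rfl⟩)
  calc (F * glAct (A := A) M) * fullShift v * (F * glAct M)⁻¹
      = F * (glAct M * fullShift v * (glAct M)⁻¹) * F⁻¹ := by group
    _ = F * fullShift ((M : Matrix (Fin d) (Fin d) ℤ).mulVec v) * F⁻¹ := by
        rw [glAct_conj]
    _ = fullShift ((M : Matrix (Fin d) (Fin d) ℤ).mulVec v) := by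
        rw [← h2]; group

end aux

/-- On the full shift `X = A^(ℤ^d)` (with `|A| ≥ 2`), the maps `h_M` are
homeomorphisms satisfying `h_M ∘ S_v ∘ h_M⁻¹ = S_{Mv}`, and the normaliser
of the shift group `𝒢 = {S_v}` in `Aut(X)` decomposes as the internal
semidirect product of the centraliser of `𝒢` with `{h_M : M ∈ GL(d,ℤ)}`:
every `G` in the normaliser is uniquely `G = F ∘ h_M`.  Hence
`R(X) = S(X) ⋊ GL(d,ℤ)`. -/
theorem stmt15 {d : ℕ} (hd : 1 ≤ d) (A : Type*) [TopologicalSpace A]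
    [DiscreteTopology A] [Nontrivial A] :
    (∀ (M : GL (Fin d) ℤ) (v : Fin d → ℤ),
      glAct (A := A) M * fullShift v * (glAct M)⁻¹ =
        fullShift ((M : Matrix (Fin d) (Fin d) ℤ).mulVec v)) ∧
    (∀ G : ((Fin d → ℤ) → A) ≃ₜ ((Fin d → ℤ) → A),
      G ∈ Subgroup.normalizer
        ((Subgroup.closure (Set.range (fullShift (d := d) (A := A)))) : Set _) ↔
      ∃! p : (((Fin d → ℤ) → A) ≃ₜ ((Fin d → ℤ) → A)) × GL (Fin d) ℤ,
        p.1 ∈ Subgroup.centralizer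
          ((Subgroup.closure (Set.range (fullShift (d := d) (A := A)))) : Set _) ∧
        G = p.1 * glAct p.2) := by
  classical
  refine ⟨fun M v => glAct_conj M v, fun G => ⟨fun hG => ?_, ?_⟩⟩
  · -- forward: normalizer element decomposes uniquely
    have hτ : ∀ v : Fin d → ℤ, ∃ w, G * fullShift (A := A) v * G⁻¹ = fullShift w := by
      intro v
      have h1 := (Subgroup.mem_normalizer_iff.1 hG (fullShift v)).1
        (Subgroup.subset_closure ⟨v, rfl⟩)
      rw [closure_range_eq] at h1
      obtain ⟨w, hw⟩ := h1
      exact ⟨w, hw.symm⟩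
    have hτ' : ∀ v : Fin d → ℤ, ∃ w, G⁻¹ * fullShift (A := A) v * G = fullShift w := by
      intro v
      have h1 := (Subgroup.mem_normalizer_iff.1 (inv_mem hG) (fullShift v)).1
        (Subgroup.subset_closure ⟨v, rfl⟩)
      rw [closure_range_eq, inv_inv] at h1
      obtain ⟨w, hw⟩ := h1
      exact ⟨w, hw.symm⟩
    choose t ht using hτ
    choose t' ht' using hτ'
    have hadd : ∀ v w, t (v + w) = t v + t w := by
      intro v w
      apply fullShift_injective (A := A)
      calc fullShift (t (v + w)) = G * fullShift (v + w) * G⁻¹ := (ht _).symm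
        _ = (G * fullShift v * G⁻¹) * (G * fullShift w * G⁻¹) := by
            rw [← fullShift_mul]; group
        _ = fullShift (t v) * fullShift (t w) := by rw [ht, ht]
        _ = fullShift (t v + t w) := fullShift_mul _ _
    have hadd' : ∀ v w, t' (v + w) = t' v + t' w := by
      intro v w
      apply fullShift_injective (A := A)
      calc fullShift (t' (v + w)) = G⁻¹ * fullShift (v + w) * G := (ht' _).symm
        _ = (G⁻¹ * fullShift v * G) * (G⁻¹ * fullShift w * G) := by
            rw [← fullShift_mul]; group
        _ = fullShift (t' v) * fullShift (t' w) := by rw [ht', ht']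
        _ = fullShift (t' v + t' w) := fullShift_mul _ _
    have htt' : ∀ v, t (t' v) = v := by
      intro v
      apply fullShift_injective (A := A)
      calc fullShift (t (t' v)) = G * fullShift (t' v) * G⁻¹ := (ht _).symm
        _ = G * (G⁻¹ * fullShift v * G) * G⁻¹ := by rw [ht']
        _ = fullShift v := by group
    have ht't : ∀ v, t' (t v) = v := by
      intro v
      apply fullShift_injective (A := A)
      calc fullShift (t' (t v)) = G⁻¹ * fullShift (t v) * G := (ht' _).symm
        _ = G⁻¹ * (G * fullShift v * G⁻¹) * G := by rw [ht]
        _ = fullShift v := by group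
    set tA : (Fin d → ℤ) →+ (Fin d → ℤ) := AddMonoidHom.mk' t hadd with htA
    set t'A : (Fin d → ℤ) →+ (Fin d → ℤ) := AddMonoidHom.mk' t' hadd' with ht'A
    set Mmat : Matrix (Fin d) (Fin d) ℤ :=
      Matrix.of fun i j => t (Pi.single j 1) i with hMmat
    set Nmat : Matrix (Fin d) (Fin d) ℤ :=
      Matrix.of fun i j => t' (Pi.single j 1) i with hNmat
    have hMv : ∀ v, Mmat.mulVec v = t v := fun v => addHom_mulVec tA v
    have hNv : ∀ v, Nmat.mulVec v = t' v := fun v => addHom_mulVec t'A v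
    have hMN : Mmat * Nmat = 1 := by
      refine matrix_ext_of_mulVec fun v => ?_
      rw [← Matrix.mulVec_mulVec, hNv, hMv, htt', Matrix.one_mulVec]
    have hNM : Nmat * Mmat = 1 := by
      refine matrix_ext_of_mulVec fun v => ?_
      rw [← Matrix.mulVec_mulVec, hMv, hNv, ht't, Matrix.one_mulVec]
    set M : GL (Fin d) ℤ := ⟨Mmat, Nmat, hMN, hNM⟩ with hM
    have key : ∀ v, G * fullShift (A := A) v * G⁻¹ =
        fullShift ((M : Matrix (Fin d) (Fin d) ℤ).mulVec v) := by
      intro v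
      rw [ht v]
      congr 1
      exact (hMv v).symm
    set F : ((Fin d → ℤ) → A) ≃ₜ ((Fin d → ℤ) → A) := G * (glAct M)⁻¹ with hF
    have hGFM : G = F * glAct M := by rw [hF, inv_mul_cancel_right]
    have hFcent : F ∈ Subgroup.centralizer
        ((Subgroup.closure (Set.range (fullShift (d := d) (A := A)))) : Set _) := by
      rw [Subgroup.mem_centralizer_iff]
      intro h hh
      rw [SetLike.mem_coe, closure_range_eq] at hh
      obtain ⟨v, rfl⟩ := hh
      set u : Fin d → ℤ := ((M⁻¹ : GL (Fin d) ℤ) : Matrix (Fin d) (Fin d) ℤ).mulVec v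
        with hu
      have h1 : glAct (A := A) M * fullShift u * (glAct M)⁻¹ = fullShift v := by
        rw [glAct_conj, hu, mulVec_inv_cancel]
      have h2 : G * fullShift (A := A) u * G⁻¹ = fullShift v := by
        rw [key, hu, mulVec_inv_cancel]
      have e1 : fullShift v * F = G * fullShift u * (glAct M)⁻¹ := by
        rw [← h2, hF]; group
      have e2 : F * fullShift v = G * fullShift u * (glAct M)⁻¹ := by
        rw [← h1, hF]; group
      exact e1.trans e2.symm
    refine ⟨(F, M), ⟨hFcent, hGFM⟩, ?_⟩
    rintro ⟨F', M'⟩ ⟨hF', hG'⟩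
    have key' : ∀ v, G * fullShift (A := A) v * G⁻¹ =
        fullShift ((M' : Matrix (Fin d) (Fin d) ℤ).mulVec v) := by
      intro v
      rw [hG']
      exact central_conj hF' M' v
    have hMM' : M' = M := by
      refine Units.ext ?_
      refine matrix_ext_of_mulVec fun v => ?_
      exact fullShift_injective (A := A) ((key' v).symm.trans (key v))
    have hFF' : F' = F := by
      have : F' * glAct (A := A) M = F * glAct M := by
        rw [← hMM', ← hG', hGFM, hMM']
      exact mul_right_cancel this
    simp [hFF', hMM']
  · -- backward direction
    rintro ⟨⟨F, M⟩, ⟨hFc, hGE⟩, -⟩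
    rw [Subgroup.mem_normalizer_iff]
    intro h
    constructor
    · intro hh
      rw [closure_range_eq] at hh ⊢
      obtain ⟨v, rfl⟩ := hh
      rw [hGE, central_conj hFc M v]
      exact ⟨_, rfl⟩
    · intro hh
      rw [closure_range_eq] at hh ⊢
      obtain ⟨w, hw⟩ := hh
      set u : Fin d → ℤ := ((M⁻¹ : GL (Fin d) ℤ) : Matrix (Fin d) (Fin d) ℤ).mulVec w
        with hu
      have h1 : G * fullShift (A := A) u * G⁻¹ = fullShift w := by
        rw [hGE, central_conj hFc M u, hu, mulVec_inv_cancel]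
      have : h = fullShift u := by
        have h2 : G * h * G⁻¹ = G * fullShift (A := A) u * G⁻¹ := hw.symm.trans h1.symm
        exact mul_left_cancel (mul_right_cancel h2)
      exact this ▸ ⟨u, rfl⟩
end

section
/- Let X_L = {x ∈ (ℤ/2ℤ)^(ℤ²) : x(n) + x(n+e₁) + x(n+e₂) = 0 in ℤ/2ℤ for all n ∈ ℤ²} be the Ledrappier shift, with the two shift maps (S_i x)(n) = x(n+e_i) for i = 1,2. Then the symmetry group of X_L is minimal: every homeomorphism G of X_L satisfying G∘S₁ = S₁∘G and G∘S₂ = S₂∘G is of the form S₁^a ∘ S₂^b for some a,b ∈ ℤ, i.e. S(X_L) = ⟨S₁,S₂⟩ ≅ ℤ². -/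
set_option synthInstance.maxHeartbeats 400000
set_option maxHeartbeats 1000000

instance : TopologicalSpace (ZMod 2) := ⊥
instance : DiscreteTopology (ZMod 2) := ⟨rfl⟩

/-- The Ledrappier shift: configurations `x : ℤ² → ℤ/2ℤ` with
`x(n) + x(n+e₁) + x(n+e₂) = 0` for all `n`. -/
def ledrappier : Set ((Fin 2 → ℤ) → ZMod 2) :=
  {x | ∀ n : Fin 2 → ℤ, x n + x (n + Pi.single 0 1) + x (n + Pi.single 1 1) = 0}

namespace Led

abbrev pt := Fin 2 → ℤ
abbrev V := (Fin 2 → ℤ) → ZMod 2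

noncomputable section
open Polynomial

def e1 : pt := Pi.single 0 1
def e2 : pt := Pi.single 1 1

lemma e1_eq : e1 = ![1, 0] := by
  funext i; fin_cases i <;> simp [e1, Pi.single_apply]

lemma e2_eq : e2 = ![0, 1] := by
  funext i; fin_cases i <;> simp [e2, Pi.single_apply]

lemma vec_eta (n : pt) : ![n 0, n 1] = n := by
  funext i; fin_cases i <;> simp

lemma vec_add (a b c d : ℤ) : (![a, b] + ![c, d] : pt) = ![a + c, b + d] := by
  funext i; fin_cases i <;> simp

lemma nsmul_e1 (k : ℕ) : (k • e1 : pt) = ![(k : ℤ), 0] := by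
  funext i; fin_cases i <;> simp [e1_eq]

lemma nsmul_e2 (k : ℕ) : (k • e2 : pt) = ![0, (k : ℤ)] := by
  funext i; fin_cases i <;> simp [e2_eq]

lemma zsmul_e1 (k : ℤ) : (k • e1 : pt) = ![k, 0] := by
  funext i; fin_cases i <;> simp [e1_eq]

lemma zsmul_e2 (k : ℤ) : (k • e2 : pt) = ![0, k] := by
  funext i; fin_cases i <;> simp [e2_eq]

lemma mem_led_iff {x : V} : x ∈ ledrappier ↔ ∀ n, x n + x (n + e1) + x (n + e2) = 0 :=
  Iff.rfl

/-- char 2 basic -/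
lemma z2 : ∀ a b c : ZMod 2, a + b + c = 0 → c = a + b := by decide

lemma z2' : ∀ a b : ZMod 2, a + b = 0 ↔ a = b := by decide

/-- defining relation, solved form -/
lemma rel {x : V} (hx : x ∈ ledrappier) (n : pt) : x (n + e2) = x n + x (n + e1) :=
  z2 _ _ _ (hx n)

lemma led_add {x y : V} (hx : x ∈ ledrappier) (hy : y ∈ ledrappier) :
    x + y ∈ ledrappier := by
  intro n
  have h1 := hx n; have h2 := hy n
  simp only [Pi.add_apply]
  have key : ∀ a b c d e f : ZMod 2, a + b + c = 0 → d + e + f = 0 →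
      a + d + (b + e) + (c + f) = 0 := by decide
  exact key _ _ _ _ _ _ h1 h2

lemma led_zero : (0 : V) ∈ ledrappier := by intro n; simp

/-- shift as a linear endomorphism of the ambient space -/
def sig (v : pt) : Module.End (ZMod 2) V where
  toFun y := fun n => y (n + v)
  map_add' _ _ := rfl
  map_smul' _ _ := rfl

@[simp] lemma sig_apply (v : pt) (y : V) (n : pt) : sig v y n = y (n + v) := rfl

lemma sig_sig (v w : pt) (y : V) : sig v (sig w y) = sig (v + w) y := by
  funext n; simp [add_assoc]

lemma led_shift {x : V} (hx : x ∈ ledrappier) (v : pt) : sig v x ∈ ledrappier := by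
  intro n
  have := hx (n + v)
  simp only [sig_apply]
  convert this using 3 <;> ring

/-- 2^k relation -/
lemma rel2k {x : V} (hx : x ∈ ledrappier) (k : ℕ) (n : pt) :
    x (n + 2 ^ k • e2) = x n + x (n + 2 ^ k • e1) := by
  induction k generalizing n with
  | zero => simpa using rel hx n
  | succ k ih =>
    have h2 : ∀ (v : pt), (2 ^ (k+1) • v : pt) = 2 ^ k • v + 2 ^ k • v := by
      intro v; rw [pow_succ, mul_comm, two_mul, add_smul]
    rw [h2, h2, ← add_assoc, ih (n + 2 ^ k • e2)]
    rw [ih n]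
    have h3 : x (n + 2 ^ k • e2 + 2 ^ k • e1) = x (n + 2 ^ k • e1) + x (n + (2 ^ k • e1 + 2 ^ k • e1)) := by
      have h4 := ih (n + 2 ^ k • e1)
      calc x (n + 2 ^ k • e2 + 2 ^ k • e1) = x (n + 2 ^ k • e1 + 2 ^ k • e2) := by
              rw [add_assoc, add_assoc, add_comm (2 ^ k • e2)]
        _ = x (n + 2 ^ k • e1) + x (n + 2 ^ k • e1 + 2 ^ k • e1) := h4
        _ = x (n + 2 ^ k • e1) + x (n + (2 ^ k • e1 + 2 ^ k • e1)) := by rw [add_assoc]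
    rw [h3]
    have : ∀ a b c : ZMod 2, a + b + (b + c) = a + c := by decide
    exact this _ _ _

/-! ### rows and extension -/

def D1 (w : ℤ → ZMod 2) : ℤ → ZMod 2 := fun i => w i + w (i + 1)

def A1 (w : ℤ → ZMod 2) : ℤ → ZMod 2 := fun i =>
  if 0 ≤ i then ∑ k ∈ Finset.range i.toNat, w k
  else ∑ k ∈ Finset.range (-i).toNat, w (i + k)

lemma D1_A1 (w : ℤ → ZMod 2) : D1 (A1 w) = w := by
  funext i
  simp only [D1, A1]
  rcases le_or_gt 0 i with hi | hi
  · rw [if_pos hi, if_pos (by omega)]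
    have h1 : (i + 1).toNat = i.toNat + 1 := by omega
    rw [h1, Finset.sum_range_succ]
    have h2 : ((i.toNat : ℤ)) = i := Int.toNat_of_nonneg hi
    rw [h2, ← add_assoc]
    have : ∀ a b : ZMod 2, a + a + b = b := by decide
    exact this _ _
  · rw [if_neg (by omega)]
    rcases eq_or_lt_of_le (by omega : i ≤ -1) with h | h
    · subst h
      rw [if_pos (by omega)]
      norm_num
    · rw [if_neg (by omega)]
      have h1 : (-i).toNat = (-(i+1)).toNat + 1 := by omega
      rw [h1, Finset.sum_range_succ']
      norm_num
      have h2 : ∀ k : ℕ, i + (k + 1) = i + 1 + k := by intro k; ring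
      have h3 : (∑ k ∈ Finset.range (-1 + -i).toNat, w (i + (k + 1)))
          = ∑ k ∈ Finset.range (-1 + -i).toNat, w (i + 1 + k) := by
        apply Finset.sum_congr rfl; intro k _; rw [h2]
      rw [h3]
      have : ∀ a b : ZMod 2, a + b + a = b := by decide
      exact this _ _

/-- row j of the configuration generated by a free row `w` at height 0 -/
def row (w : ℤ → ZMod 2) (j : ℤ) : ℤ → ZMod 2 :=
  if 0 ≤ j then D1^[j.toNat] w else A1^[(-j).toNat] w

lemma row_succ (w : ℤ → ZMod 2) (j : ℤ) : row w (j + 1) = D1 (row w j) := by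
  unfold row
  rcases le_or_gt 0 j with hj | hj
  · rw [if_pos hj, if_pos (show (0:ℤ) ≤ j + 1 by omega)]
    have : (j + 1).toNat = j.toNat + 1 := by omega
    rw [this, Function.iterate_succ_apply']
  · rw [if_neg (show ¬ (0:ℤ) ≤ j by omega)]
    rcases eq_or_lt_of_le (by omega : j ≤ -1) with h | h
    · subst h
      norm_num
      exact (D1_A1 w).symm
    · rw [if_neg (show ¬ (0:ℤ) ≤ j + 1 by omega)]
      have h1 : (-j).toNat = (-(j+1)).toNat + 1 := by omega
      rw [h1, Function.iterate_succ_apply']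
      rw [D1_A1]

def extCfg (w : ℤ → ZMod 2) : V := fun n => row w (n 1) (n 0)

lemma extCfg_mem (w : ℤ → ZMod 2) : extCfg w ∈ ledrappier := by
  intro n
  show extCfg w n + extCfg w (n + e1) + extCfg w (n + e2) = 0
  have he1 : (n + e1) 0 = n 0 + 1 ∧ (n + e1) 1 = n 1 := by
    constructor <;> simp [e1, Pi.single_apply]
  have he2 : (n + e2) 0 = n 0 ∧ (n + e2) 1 = n 1 + 1 := by
    constructor <;> simp [e2, Pi.single_apply]
  simp only [extCfg, he1.1, he1.2, he2.1, he2.2]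
  rw [row_succ]
  show row w (n 1) (n 0) + row w (n 1) (n 0 + 1) + D1 (row w (n 1)) (n 0) = 0
  unfold D1
  have : ∀ a b : ZMod 2, a + b + (a + b) = 0 := by decide
  exact this _ _

lemma extCfg_at0 (w : ℤ → ZMod 2) (i : ℤ) : extCfg w ![i, 0] = w i := by
  simp [extCfg, row]

lemma extCfg_atS (w : ℤ → ZMod 2) (i : ℤ) (s : ℕ) :
    extCfg w ![i, (s : ℤ)] = D1^[s] w i := by
  simp [extCfg, row]

/-! ### determinism -/

lemma det {d : V} (hd : d ∈ ledrappier) (j0 a b : ℤ)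
    (h : ∀ i, a ≤ i → i ≤ b → d ![i, j0] = 0) :
    ∀ t : ℕ, ∀ i, a ≤ i → i + t ≤ b → d ![i, j0 + t] = 0 := by
  intro t
  induction t with
  | zero => intro i hi1 hi2; simpa using h i hi1 (by omega)
  | succ t ih =>
    intro i hi1 hi2
    have key : d ![i, j0 + t + 1] = d ![i, j0 + t] + d ![i + 1, j0 + t] := by
      have := rel hd ![i, j0 + t]
      rw [e1_eq, e2_eq, vec_add, vec_add] at this
      simpa using this
    have h1 : d ![i, j0 + t] = 0 := ih i hi1 (by omega)
    have h2 : d ![i + 1, j0 + t] = 0 := ih (i+1) (by omega) (by omega)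
    have : ((j0 + t + 1 : ℤ)) = j0 + ((t : ℕ) + 1 : ℕ) := by push_cast; ring
    rw [← this, key, h1, h2, add_zero]

/-- two configurations agreeing on a long bottom row segment agree on the box -/
lemma box_agree {x u : V} (hx : x ∈ ledrappier) (hu : u ∈ ledrappier) (r : ℕ)
    (h : ∀ i : ℤ, -(r:ℤ) ≤ i → i ≤ 3*r → x ![i, -(r:ℤ)] = u ![i, -(r:ℤ)]) :
    ∀ n : pt, (n 0).natAbs ≤ r → (n 1).natAbs ≤ r → x n = u n := by
  have hd : x + u ∈ ledrappier := led_add hx hu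
  have hz : ∀ i : ℤ, -(r:ℤ) ≤ i → i ≤ 3*r → (x + u) ![i, -(r:ℤ)] = 0 := by
    intro i h1 h2
    simp only [Pi.add_apply]
    rw [(z2' _ _)]
    exact h i h1 h2
  intro n h0 h1
  have key := det hd (-(r:ℤ)) (-(r:ℤ)) (3*r) hz ((n 1 + r).toNat) (n 0) (by omega) (by omega)
  have : -(r:ℤ) + ((n 1 + r).toNat : ℤ) = n 1 := by omega
  rw [this, vec_eta] at key
  have := (z2' (x n) (u n)).mp
  simp only [Pi.add_apply] at key
  exact this key

/-! ### topology -/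

instance : ContinuousAdd (ZMod 2) := ⟨continuous_of_discreteTopology⟩

lemma isClosed_led : IsClosed ledrappier := by
  have : ledrappier = ⋂ (n : pt), {x : V | x n + x (n + e1) + x (n + e2) = 0} := by
    ext x; simp only [Set.mem_iInter, Set.mem_setOf_eq]; exact mem_led_iff
  rw [this]
  refine isClosed_iInter fun n => ?_
  have hc : Continuous fun x : V => x n + x (n + e1) + x (n + e2) := by
    fun_prop
  exact IsClosed.preimage hc isClosed_singleton

instance : CompactSpace ledrappier :=
  isCompact_iff_compactSpace.mp (isClosed_led.isCompact)

/-! ### shift homeomorphisms -/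

def shiftH (v : pt) : ledrappier ≃ₜ ledrappier where
  toFun x := ⟨sig v x.1, led_shift x.2 v⟩
  invFun x := ⟨sig (-v) x.1, led_shift x.2 (-v)⟩
  left_inv x := by
    apply Subtype.ext; funext n; simp [sig_apply]
  right_inv x := by
    apply Subtype.ext; funext n; simp [sig_apply]
  continuous_toFun := by
    apply Continuous.subtype_mk
    exact continuous_pi fun n => (continuous_apply (n + v)).comp continuous_subtype_val
  continuous_invFun := by
    apply Continuous.subtype_mk
    exact continuous_pi fun n => (continuous_apply (n + -v)).comp continuous_subtype_val

@[simp] lemma shiftH_apply (v : pt) (x : ledrappier) (n : pt) :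
    ((shiftH v x : ledrappier) : V) n = (x : V) (n + v) := rfl

def S1 : ledrappier ≃ₜ ledrappier := shiftH e1
def S2 : ledrappier ≃ₜ ledrappier := shiftH e2

lemma mul_apply (f g : ledrappier ≃ₜ ledrappier) (x : ledrappier) :
    (f * g) x = f (g x) := rfl

lemma inv_shiftH_apply (v : pt) (x : ledrappier) (n : pt) :
    (((shiftH v)⁻¹ x : ledrappier) : V) n = (x : V) (n + -v) := rfl

lemma pow_shiftH_apply (v : pt) (k : ℕ) :
    ∀ (x : ledrappier) (n : pt),
      (((shiftH v ^ k) x : ledrappier) : V) n = (x : V) (n + k • v) := by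
  induction k with
  | zero => intro x n; simp only [pow_zero, zero_smul, add_zero]; rfl
  | succ k ih =>
    intro x n
    rw [pow_succ, mul_apply, ih (shiftH v x) n, shiftH_apply, succ_nsmul, add_assoc]

lemma zpow_shiftH_apply (v : pt) (a : ℤ) :
    ∀ (x : ledrappier) (n : pt),
      (((shiftH v ^ a) x : ledrappier) : V) n = (x : V) (n + a • v) := by
  induction a using Int.induction_on with
  | zero => intro x n; simp only [zpow_zero, zero_smul, add_zero]; rfl
  | succ k ih =>
    intro x n
    rw [zpow_add_one, mul_apply, ih (shiftH v x) n, shiftH_apply]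
    congr 1
    rw [add_smul, one_smul, add_assoc]
  | pred k ih =>
    intro x n
    rw [sub_eq_add_neg, zpow_add, zpow_neg_one, mul_apply, ih ((shiftH v)⁻¹ x) n,
      inv_shiftH_apply]
    congr 1
    rw [add_smul, neg_one_smul, add_assoc]

/-- combined shift by an arbitrary vector, as S1^a * S2^b -/
lemma T_apply (a b : ℤ) (x : ledrappier) (n : pt) :
    (((S1 ^ a * S2 ^ b) x : ledrappier) : V) n = (x : V) (n + ![a, b]) := by
  rw [mul_apply]
  unfold S1 S2
  rw [zpow_shiftH_apply e1 a ((shiftH e2 ^ b) x) n]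
  rw [zpow_shiftH_apply e2 b x (n + a • e1)]
  rw [zsmul_e1, zsmul_e2, add_assoc, vec_add]
  norm_num

/-! ### locality -/

lemma locality (φ : ledrappier → ZMod 2) (hφ : Continuous φ) :
    ∃ r : ℕ, ∀ x y : ledrappier,
      (∀ n : pt, (n 0).natAbs ≤ r → (n 1).natAbs ≤ r → (x : V) n = (y : V) n) →
      φ x = φ y := by
  classical
  have main : ∀ x : ledrappier, ∃ I : Finset pt,
      ∀ y : ledrappier, (∀ a ∈ I, (y : V) a = (x : V) a) → φ y = φ x := by
    intro x
    have hopen : IsOpen (φ ⁻¹' {φ x}) := hφ.isOpen_preimage _ (isOpen_discrete _)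
    rw [isOpen_induced_iff] at hopen
    obtain ⟨U, hU, hUeq⟩ := hopen
    have hxU : (x : V) ∈ U := by
      have : x ∈ Subtype.val ⁻¹' U := by rw [hUeq]; exact rfl
      exact this
    obtain ⟨I, u, hu, hsub⟩ := (isOpen_pi_iff.mp hU) (x : V) hxU
    refine ⟨I, fun y hy => ?_⟩
    have : (y : V) ∈ (I : Set pt).pi u := by
      intro a ha
      rw [hy a ha]
      exact (hu a ha).2
    have : y ∈ Subtype.val ⁻¹' U := hsub this
    rw [hUeq] at this
    exact this
  choose I hI using main
  -- cover
  set Ucov : ledrappier → Set ledrappier :=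
    fun x => {y | ∀ a ∈ I x, (y : V) a = (x : V) a} with hUcov
  have hUopen : ∀ x, IsOpen (Ucov x) := by
    intro x
    have : Ucov x = Subtype.val ⁻¹' ((I x : Set pt).pi (fun a => {(x : V) a})) := by
      ext y
      simp [Ucov, Set.mem_pi]
    rw [this]
    apply (isOpen_set_pi (Finset.finite_toSet _) fun a _ => isOpen_discrete _).preimage
      continuous_subtype_val
  have hcover : (Set.univ : Set ledrappier) ⊆ ⋃ x, Ucov x := by
    intro x _
    exact Set.mem_iUnion.mpr ⟨x, fun a _ => rfl⟩
  obtain ⟨t, ht⟩ := isCompact_univ.elim_finite_subcover Ucov hUopen hcover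
  set r : ℕ := (t.biUnion I).sup (fun a => max (a 0).natAbs (a 1).natAbs) with hr
  refine ⟨r, fun x y hxy => ?_⟩
  obtain ⟨z, hz, hxz⟩ : ∃ z ∈ t, x ∈ Ucov z := by
    have := ht (Set.mem_univ x)
    simpa using this
  have hyz : y ∈ Ucov z := by
    intro a ha
    have hmem : a ∈ t.biUnion I := Finset.mem_biUnion.mpr ⟨z, hz, ha⟩
    have hle : max (a 0).natAbs (a 1).natAbs ≤ r :=
      Finset.le_sup (f := fun a : pt => max (a 0).natAbs (a 1).natAbs) hmem
    have h1 := hxy a (le_trans (le_max_left _ _) hle) (le_trans (le_max_right _ _) hle)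
    rw [← h1]
    exact hxz a ha
  rw [hI z x hxz, hI z y hyz]

/-! ### polynomial action -/

def Phi (Q : Polynomial (ZMod 2)) : Module.End (ZMod 2) V :=
  Polynomial.aeval (sig e1) Q

lemma sig_pow (v : pt) (k : ℕ) : (sig v) ^ k = sig (k • v) := by
  induction k with
  | zero =>
    ext y n
    simp [sig_apply]
  | succ k ih =>
    rw [pow_succ, ih]
    ext y n
    simp only [Module.End.mul_apply, sig_apply]
    rw [succ_nsmul, add_assoc]

lemma Phi_monomial (k : ℕ) (a : ZMod 2) (y : V) (n : pt) :
    Phi (Polynomial.monomial k a) y n = a * y (n + k • e1) := by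
  unfold Phi
  rw [Polynomial.aeval_monomial, sig_pow]
  simp [Module.algebraMap_end_apply]

lemma Phi_apply_support (Q : Polynomial (ZMod 2)) (y : V) (m : pt) :
    Phi Q y m = ∑ j ∈ Q.support, Q.coeff j * y (m + j • e1) := by
  conv_lhs => rw [Q.as_sum_support]
  unfold Phi
  rw [map_sum]
  rw [LinearMap.sum_apply, Finset.sum_apply]
  exact Finset.sum_congr rfl fun j _ => Phi_monomial j (Q.coeff j) y m

lemma Phi_mul_apply (P Q : Polynomial (ZMod 2)) (y : V) :
    Phi (P * Q) y = Phi P (Phi Q y) := by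
  unfold Phi
  rw [map_mul]
  rfl

lemma Phi_sig_comm (v : pt) (Q : Polynomial (ZMod 2)) (y : V) :
    Phi Q (sig v y) = sig v (Phi Q y) := by
  funext n
  rw [Phi_apply_support, sig_apply, Phi_apply_support]
  refine Finset.sum_congr rfl fun j _ => ?_
  rw [sig_apply]
  congr 2
  rw [add_right_comm]

lemma led_mul_mem {c : ZMod 2} {y : V} (hy : y ∈ ledrappier) :
    (fun n => c * y n) ∈ ledrappier := by
  intro n
  show c * y n + c * y (n + Pi.single 0 1) + c * y (n + Pi.single 1 1) = 0
  rw [← mul_add, ← mul_add, hy n, mul_zero]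

lemma led_sum_mem {ι : Type*} (F : Finset ι) (g : ι → V) (hg : ∀ i ∈ F, g i ∈ ledrappier) :
    (∑ i ∈ F, g i) ∈ ledrappier :=
  Finset.sum_induction g (· ∈ ledrappier) (fun _ _ ha hb => led_add ha hb) led_zero hg

lemma Phi_led_mem {y : V} (hy : y ∈ ledrappier) (Q : Polynomial (ZMod 2)) :
    Phi Q y ∈ ledrappier := by
  have : Phi Q y = ∑ j ∈ Q.support, fun n => Q.coeff j * y (n + j • e1) := by
    funext n
    rw [Phi_apply_support, Finset.sum_apply]
  rw [this]
  exact led_sum_mem _ _ fun j _ => led_mul_mem (led_shift hy (j • e1))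

lemma Phi_one_add_X {y : V} (hy : y ∈ ledrappier) :
    Phi (1 + Polynomial.X) y = sig e2 y := by
  unfold Phi
  rw [map_add, Polynomial.aeval_one, Polynomial.aeval_X]
  funext n
  simp only [LinearMap.add_apply, Module.End.one_apply, sig_apply]
  exact (rel hy n).symm

lemma Phi_XaXb (α β : ℕ) {y : V} (hy : y ∈ ledrappier) :
    Phi (Polynomial.X ^ α * (1 + Polynomial.X) ^ β) y = sig ![(α:ℤ), (β:ℤ)] y := by
  induction β with
  | zero =>
    rw [pow_zero, mul_one]
    unfold Phi
    rw [Polynomial.aeval_X_pow, sig_pow, nsmul_e1]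
    norm_num
  | succ β ih =>
    have hre : (Polynomial.X ^ α * (1 + Polynomial.X) ^ (β + 1) : Polynomial (ZMod 2))
        = (1 + Polynomial.X) * (Polynomial.X ^ α * (1 + Polynomial.X) ^ β) := by ring
    rw [hre, Phi_mul_apply, ih]
    rw [Phi_one_add_X (led_shift hy _), sig_sig]
    congr 1
    rw [e2_eq, vec_add]
    push_cast
    norm_num
    rw [add_comm]

/-! ### additivity of the extension -/

lemma D1_add (w w' : ℤ → ZMod 2) : D1 (w + w') = D1 w + D1 w' := by
  funext i
  simp only [D1, Pi.add_apply]
  ring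

lemma A1_add (w w' : ℤ → ZMod 2) : A1 (w + w') = A1 w + A1 w' := by
  funext i
  simp only [A1, Pi.add_apply]
  split <;> rw [← Finset.sum_add_distrib]

lemma iter_add (f : (ℤ → ZMod 2) → (ℤ → ZMod 2))
    (hf : ∀ w w', f (w + w') = f w + f w') (k : ℕ) (w w' : ℤ → ZMod 2) :
    f^[k] (w + w') = f^[k] w + f^[k] w' := by
  induction k generalizing w w' with
  | zero => rfl
  | succ k ih =>
    rw [Function.iterate_succ_apply, Function.iterate_succ_apply,
      Function.iterate_succ_apply, hf, ih]

lemma extCfg_add (w w' : ℤ → ZMod 2) : extCfg (w + w') = extCfg w + extCfg w' := by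
  funext n
  simp only [extCfg, row, Pi.add_apply]
  split
  · rw [iter_add D1 D1_add]; rfl
  · rw [iter_add A1 A1_add]; rfl

lemma extCfg_zero : extCfg 0 = 0 := by
  have h1 := extCfg_add 0 0
  rw [add_zero] at h1
  have h2 : extCfg 0 + extCfg 0 = 0 := by
    funext n
    simp only [Pi.add_apply, Pi.zero_apply]
    exact CharTwo.add_self_eq_zero _
  exact h1.trans h2


/-! ### lift of a free row -/

def delta (i : ℤ) : ℤ → ZMod 2 := fun i' => if i' = i then 1 else 0

def lift (r : ℕ) (w : ℤ → ZMod 2) : ledrappier :=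
  ⟨sig ![0, (r:ℤ)] (extCfg w), led_shift (extCfg_mem w) _⟩

lemma lift_val (r : ℕ) (w : ℤ → ZMod 2) (n : pt) :
    ((lift r w : ledrappier) : V) n = extCfg w (n + ![0, (r:ℤ)]) := rfl

lemma lift_row (r : ℕ) (w : ℤ → ZMod 2) (i : ℤ) :
    ((lift r w : ledrappier) : V) ![i, -(r:ℤ)] = w i := by
  rw [lift_val, vec_add]
  norm_num
  exact extCfg_at0 w i

lemma lift_add (r : ℕ) (w w' : ℤ → ZMod 2) :
    ((lift r (w + w') : ledrappier) : V)
      = ((lift r w : ledrappier) : V) + ((lift r w' : ledrappier) : V) := by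
  funext n
  rw [lift_val, extCfg_add]
  rfl

lemma lift_zero (r : ℕ) : ((lift r 0 : ledrappier) : V) = 0 := by
  funext n
  rw [lift_val, extCfg_zero]
  rfl

/-! ### the local rule of a commuting homeomorphism -/

def phiOf (G : ledrappier ≃ₜ ledrappier) : ledrappier → ZMod 2 := fun y => (G y : V) 0

lemma phi_cont (G : ledrappier ≃ₜ ledrappier) : Continuous (phiOf G) :=
  (continuous_apply (0 : pt)).comp (continuous_subtype_val.comp G.continuous)

section rep

variable {G : ledrappier ≃ₜ ledrappier}

lemma phi_add (h1 : G * S1 = S1 * G) (h2 : G * S2 = S2 * G) {r : ℕ}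
    (hloc : ∀ x y : ledrappier,
      (∀ n : pt, (n 0).natAbs ≤ r → (n 1).natAbs ≤ r → (x : V) n = (y : V) n) →
      phiOf G x = phiOf G y)
    (u v : ledrappier) :
    phiOf G ⟨(u : V) + (v : V), led_add u.2 v.2⟩ = phiOf G u + phiOf G v := by
  set k : ℕ := 4 * r + 1 with hk
  have hN : 4 * r < 2 ^ k := lt_of_le_of_lt (by omega) (Nat.lt_two_pow_self (n := k))
  have hNz : (4 * r : ℤ) < (2 ^ k : ℕ) := by exact_mod_cast hN
  set N : ℕ := 2 ^ k with hNdef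
  set w : ℤ → ZMod 2 := fun i =>
    if i < (N : ℤ) - r then (u : V) ![i, -(r:ℤ)] else (v : V) ![i - N, -(r:ℤ)] with hw
  set X0 : ledrappier := lift r w with hX0
  have hrowu : ∀ i : ℤ, -(r:ℤ) ≤ i → i ≤ 3 * r →
      (X0 : V) ![i, -(r:ℤ)] = (u : V) ![i, -(r:ℤ)] := by
    intro i hi1 hi2
    rw [hX0, lift_row, hw]
    simp only
    rw [if_pos (by omega)]
  have agu := box_agree X0.2 u.2 r hrowu
  set XN : ledrappier := (S1 ^ N) X0 with hXN
  have hXNval : ∀ n : pt, (XN : V) n = (X0 : V) (n + ![(N:ℤ), 0]) := by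
    intro n
    rw [hXN]
    show (((shiftH e1 ^ N) X0 : ledrappier) : V) n = _
    rw [pow_shiftH_apply, nsmul_e1]
  have hrowv : ∀ i : ℤ, -(r:ℤ) ≤ i → i ≤ 3 * r →
      (XN : V) ![i, -(r:ℤ)] = (v : V) ![i, -(r:ℤ)] := by
    intro i hi1 hi2
    rw [hXNval, vec_add]
    norm_num
    rw [hX0, lift_row, hw]
    simp only
    rw [if_neg (by omega)]
    norm_num
  have agv := box_agree XN.2 v.2 r hrowv
  -- u + v agrees with S2^N X0 on the box
  set Y : ledrappier := (S2 ^ N) X0 with hY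
  have hYval : ∀ n : pt, (Y : V) n = (X0 : V) n + (XN : V) n := by
    intro n
    rw [hY]
    show (((shiftH e2 ^ N) X0 : ledrappier) : V) n = _
    rw [pow_shiftH_apply]
    rw [hXNval]
    have := rel2k X0.2 k n
    rw [this]
    congr 2
    rw [nsmul_e1]
  have step1 : phiOf G ⟨(u : V) + (v : V), led_add u.2 v.2⟩ = phiOf G Y := by
    apply hloc
    intro n h0 h1
    show (u : V) n + (v : V) n = (Y : V) n
    rw [hYval, agu n h0 h1, agv n h0 h1]
  -- use commutation
  have hc2 : G * S2 ^ N = S2 ^ N * G := (Commute.pow_right h2 N)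
  have hc1 : G * S1 ^ N = S1 ^ N * G := (Commute.pow_right h1 N)
  have happ2 : G ((S2 ^ N) X0) = (S2 ^ N) (G X0) := by
    have := congrArg (fun F : ledrappier ≃ₜ ledrappier => F X0) hc2
    simpa only [mul_apply] using this
  have happ1 : G ((S1 ^ N) X0) = (S1 ^ N) (G X0) := by
    have := congrArg (fun F : ledrappier ≃ₜ ledrappier => F X0) hc1
    simpa only [mul_apply] using this
  have step2 : phiOf G Y = phiOf G X0 + phiOf G XN := by
    show (G ((S2 ^ N) X0) : V) 0 = (G X0 : V) 0 + (G ((S1 ^ N) X0) : V) 0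
    rw [happ2, happ1]
    show (((shiftH e2 ^ N) (G X0) : ledrappier) : V) 0 = _ + (((shiftH e1 ^ N) (G X0) : ledrappier) : V) 0
    rw [pow_shiftH_apply, pow_shiftH_apply]
    exact rel2k (G X0).2 k 0
  rw [step1, step2]
  congr 1
  · exact hloc X0 u agu
  · exact hloc XN v agv

/-- every commuting homeomorphism is given by a polynomial in the horizontal
shift, applied at a fixed vertical offset -/
lemma repG (h1 : G * S1 = S1 * G) (h2 : G * S2 = S2 * G) :
    ∃ (r : ℕ) (P : Polynomial (ZMod 2)), ∀ (x : ledrappier) (m : pt),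
      (G x : V) m = Phi P (x : V) (m + ![-(r:ℤ), -(r:ℤ)]) := by
  classical
  obtain ⟨r, hloc⟩ := locality (phiOf G) (phi_cont G)
  have hadd := phi_add h1 h2 hloc
  have hzero : ∀ (z : ledrappier), (z : V) = 0 → phiOf G z = 0 := by
    intro z hz
    have h0 := hadd z z
    have hzz : (⟨(z : V) + (z : V), led_add z.2 z.2⟩ : ledrappier) = z := by
      apply Subtype.ext
      show (z : V) + (z : V) = (z : V)
      rw [hz]
      norm_num
    rw [congrArg (phiOf G) hzz] at h0
    have : ∀ a : ZMod 2, a = a + a → a = 0 := by decide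
    exact this _ h0
  set c : ℤ → ZMod 2 := fun i => phiOf G (lift r (delta i)) with hc
  have hsum : ∀ (F : Finset ℤ) (g : ℤ → (ℤ → ZMod 2)),
      phiOf G (lift r (∑ i ∈ F, g i)) = ∑ i ∈ F, phiOf G (lift r (g i)) := by
    intro F g
    induction F using Finset.cons_induction with
    | empty =>
      rw [Finset.sum_empty, Finset.sum_empty]
      exact hzero _ (lift_zero r)
    | cons a F ha ih =>
      rw [Finset.sum_cons, Finset.sum_cons, ← ih]
      have : lift r (g a + ∑ i ∈ F, g i)
          = ⟨((lift r (g a) : ledrappier) : V) + ((lift r (∑ i ∈ F, g i) : ledrappier) : V),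
             led_add (lift r (g a)).2 (lift r (∑ i ∈ F, g i)).2⟩ := by
        apply Subtype.ext
        exact lift_add r _ _
      rw [this]
      exact hadd _ _
  have hdelta : ∀ (i : ℤ) (cv : ZMod 2),
      phiOf G (lift r (fun i' => if i' = i then cv else 0)) = cv * c i := by
    intro i cv
    have h01 : cv = 0 ∨ cv = 1 := by
      have : ∀ a : ZMod 2, a = 0 ∨ a = 1 := by decide
      exact this cv
    rcases h01 with h | h
    · subst h
      rw [zero_mul]
      apply hzero
      have : (fun i' : ℤ => if i' = i then (0 : ZMod 2) else 0) = 0 := by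
        funext i'; simp
      rw [this]
      exact lift_zero r
    · subst h
      rw [one_mul, hc]
      rfl
  have hφrep : ∀ x : ledrappier,
      phiOf G x = ∑ i ∈ Finset.Icc (-(r:ℤ)) (3*r), (x : V) ![i, -(r:ℤ)] * c i := by
    intro x
    set trunc : ℤ → ZMod 2 := fun i' =>
      if i' ∈ Finset.Icc (-(r:ℤ)) (3*(r:ℤ)) then (x : V) ![i', -(r:ℤ)] else 0 with htr
    have step1 : phiOf G x = phiOf G (lift r trunc) := by
      apply hloc
      apply box_agree x.2 (lift r trunc).2 r
      intro i hi1 hi2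
      rw [lift_row, htr]
      simp only
      rw [if_pos (Finset.mem_Icc.mpr ⟨hi1, by omega⟩)]
    have step2 : trunc = ∑ i ∈ Finset.Icc (-(r:ℤ)) (3*(r:ℤ)),
        (fun i' => if i' = i then (x : V) ![i, -(r:ℤ)] else 0) := by
      funext i'
      rw [Finset.sum_apply]
      rw [htr]
      simp only
      exact (Finset.sum_ite_eq (Finset.Icc (-(r:ℤ)) (3*(r:ℤ)))
        i' (fun i => (x : V) ![i, -(r:ℤ)])).symm
    rw [step1, step2, hsum]
    refine Finset.sum_congr rfl fun i _ => ?_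
    exact hdelta i _
  -- the polynomial
  set P : Polynomial (ZMod 2) :=
    ∑ i ∈ Finset.Icc (-(r:ℤ)) (3*(r:ℤ)), Polynomial.monomial (i + r).toNat (c i) with hP
  have hPapp : ∀ (y : V) (m : pt),
      Phi P y m = ∑ i ∈ Finset.Icc (-(r:ℤ)) (3*(r:ℤ)), c i * y (m + ![i + r, 0]) := by
    intro y m
    rw [hP]
    unfold Phi
    rw [map_sum, LinearMap.sum_apply, Finset.sum_apply]
    refine Finset.sum_congr rfl fun i hi => ?_
    have : Polynomial.aeval (sig e1) (Polynomial.monomial (i + r).toNat (c i)) y m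
        = Phi (Polynomial.monomial (i + r).toNat (c i)) y m := rfl
    rw [this, Phi_monomial, nsmul_e1]
    have hi' : -(r:ℤ) ≤ i := (Finset.mem_Icc.mp hi).1
    rw [Int.toNat_of_nonneg (show (0:ℤ) ≤ i + r by omega)]
  refine ⟨r, P, fun x m => ?_⟩
  -- shift to base point
  have hcomm : G * (S1 ^ (m 0) * S2 ^ (m 1)) = (S1 ^ (m 0) * S2 ^ (m 1)) * G :=
    Commute.mul_right (Commute.zpow_right h1 (m 0)) (Commute.zpow_right h2 (m 1))
  have happ : G ((S1 ^ (m 0) * S2 ^ (m 1)) x) = (S1 ^ (m 0) * S2 ^ (m 1)) (G x) := by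
    have := congrArg (fun F : ledrappier ≃ₜ ledrappier => F x) hcomm
    simpa only [mul_apply] using this
  have step : (G x : V) m = phiOf G ((S1 ^ (m 0) * S2 ^ (m 1)) x) := by
    show (G x : V) m = (G ((S1 ^ (m 0) * S2 ^ (m 1)) x) : V) 0
    rw [happ, T_apply, zero_add, vec_eta]
  rw [step, hφrep, hPapp]
  refine Finset.sum_congr rfl fun i _ => ?_
  rw [T_apply, vec_eta, mul_comm]
  have hvec : (![i, -(r:ℤ)] + m : pt) = m + ![-(r:ℤ), -(r:ℤ)] + ![i + r, 0] := by
    funext j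
    fin_cases j <;>
      simp [Pi.add_apply, Matrix.cons_val_zero, Matrix.cons_val_one, Matrix.head_cons,
        Matrix.vecHead, Matrix.vecTail] <;>
      ring
  rw [hvec]

end rep

/-! ### binomial coefficients mod 2 -/

def bin (h : ℕ) (m : ℤ) : ZMod 2 := if 0 ≤ m then ((h.choose m.toNat : ℕ) : ZMod 2) else 0

lemma bin_pascal (h : ℕ) (m : ℤ) : bin (h + 1) m = bin h m + bin h (m - 1) := by
  unfold bin
  rcases lt_or_ge m 0 with hm | hm
  · rw [if_neg (by omega), if_neg (by omega), if_neg (by omega), add_zero]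
  · rcases eq_or_lt_of_le hm with hm0 | hm1
    · rw [← hm0]
      rw [if_pos le_rfl, if_pos le_rfl, if_neg (by omega)]
      norm_num
    · rw [if_pos (by omega), if_pos (by omega), if_pos (by omega)]
      have h1 : m.toNat = (m - 1).toNat + 1 := by omega
      rw [h1, Nat.choose_succ_succ]
      push_cast
      ring

lemma D1_delta (h : ℕ) : ∀ i : ℤ, D1^[h] (delta 0) i = bin h (-i) := by
  induction h with
  | zero =>
    intro i
    show delta 0 i = bin 0 (-i)
    unfold delta bin
    rcases lt_trichotomy i 0 with hi | hi | hi
    · rw [if_neg (by omega), if_pos (by omega)]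
      have : (-i).toNat = (-i).toNat - 1 + 1 := by omega
      rw [this, Nat.choose_zero_succ]
      norm_num
    · subst hi; norm_num
    · rw [if_neg (by omega), if_neg (by omega)]
  | succ h ih =>
    intro i
    rw [Function.iterate_succ_apply']
    show D1^[h] (delta 0) i + D1^[h] (delta 0) (i + 1) = bin (h + 1) (-i)
    rw [ih i, ih (i + 1), bin_pascal]
    congr 2
    omega

/-! ### coefficient extraction -/

lemma coeff_extract {R : Polynomial (ZMod 2)} {s : ℕ}
    (hid : ∀ y : V, y ∈ ledrappier → ∀ n : pt,
      y n = Phi R y (n + ![-(s:ℤ), -(s:ℤ)])) :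
    R = Polynomial.X ^ s * (1 + Polynomial.X) ^ s := by
  apply Polynomial.ext
  intro q
  set x : V := sig ![0, (s:ℤ)] (extCfg (delta 0)) with hxdef
  have hx : x ∈ ledrappier := led_shift (extCfg_mem _) _
  have hxrow : ∀ i : ℤ, x ![i, -(s:ℤ)] = delta 0 i := by
    intro i
    rw [hxdef, sig_apply, vec_add]
    norm_num
    exact extCfg_at0 _ i
  have hxtop : ∀ i : ℤ, x ![i, 0] = D1^[s] (delta 0) i := by
    intro i
    rw [hxdef, sig_apply, vec_add]
    norm_num
    exact extCfg_atS _ i s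
  have hkey := hid x hx ![(s:ℤ) - q, 0]
  rw [hxtop] at hkey
  have hvec : (![(s:ℤ) - q, 0] + ![-(s:ℤ), -(s:ℤ)] : pt) = ![-(q:ℤ), -(s:ℤ)] := by
    rw [vec_add]; congr 1 <;> ring_nf
  rw [hvec] at hkey
  rw [Phi_apply_support] at hkey
  have hterm : ∀ j ∈ R.support,
      R.coeff j * x (![-(q:ℤ), -(s:ℤ)] + j • e1)
        = if j = q then R.coeff j else 0 := by
    intro j _
    rw [nsmul_e1, vec_add]
    have : (-(q:ℤ) + j) = j - q := by ring
    rw [this, add_zero, hxrow]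
    unfold delta
    by_cases hjq : j = q
    · rw [if_pos (by omega), if_pos hjq, mul_one]
    · rw [if_neg (by omega), if_neg hjq, mul_zero]
  rw [Finset.sum_congr rfl hterm] at hkey
  rw [Finset.sum_ite_eq' R.support q (fun j => R.coeff j)] at hkey
  have hR : R.coeff q = D1^[s] (delta 0) ((s:ℤ) - q) := by
    by_cases hq : q ∈ R.support
    · rw [if_pos hq] at hkey; exact hkey.symm
    · rw [if_neg hq] at hkey
      rw [Polynomial.notMem_support_iff.mp hq, ← hkey]
  rw [hR, D1_delta]
  have : -((s:ℤ) - q) = (q:ℤ) - s := by ring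
  rw [this]
  -- now compute the coefficient of X^s (1+X)^s
  rw [mul_comm, Polynomial.coeff_mul_X_pow']
  unfold bin
  by_cases hqs : s ≤ q
  · rw [if_pos hqs, if_pos (by omega), Polynomial.coeff_one_add_X_pow]
    rw [show ((q:ℤ) - (s:ℤ)).toNat = q - s by omega]
  · rw [if_neg hqs, if_neg (by omega)]

/-! ### factorization in (ZMod 2)[X] -/

lemma unit_eq_one {Q : Polynomial (ZMod 2)} (h : IsUnit Q) : Q = 1 := by
  obtain ⟨c, hc, rfl⟩ := Polynomial.isUnit_iff.mp h
  have : c = 1 := by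
    have hc0 : c ≠ 0 := hc.ne_zero
    have : ∀ a : ZMod 2, a ≠ 0 → a = 1 := by decide
    exact this c hc0
  rw [this, map_one]

lemma one_add_X_ne_zero : (1 + Polynomial.X : Polynomial (ZMod 2)) ≠ 0 := by
  intro h
  have := congrArg (fun p => Polynomial.coeff p 1) h
  simp [Polynomial.coeff_one] at this

lemma prime_one_add_X : Prime (1 + Polynomial.X : Polynomial (ZMod 2)) := by
  have h : (1 + Polynomial.X : Polynomial (ZMod 2))
      = Polynomial.X - Polynomial.C 1 := by
    rw [map_one]
    have h2 : (1 + 1 : Polynomial (ZMod 2)) = 0 := by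
      rw [← map_one (Polynomial.C (R := ZMod 2)), ← map_add,
        show (1 + 1 : ZMod 2) = 0 by decide, map_zero]
    have hneg : (-1 : Polynomial (ZMod 2)) = 1 := neg_eq_of_add_eq_zero_left h2
    rw [sub_eq_add_neg, hneg, add_comm]
  rw [h]
  exact Polynomial.prime_X_sub_C 1

lemma not_X_dvd_pow_one_add_X (m : ℕ) :
    ¬ (Polynomial.X : Polynomial (ZMod 2)) ∣ (1 + Polynomial.X) ^ m := by
  intro h
  have hX : (Polynomial.X : Polynomial (ZMod 2)) ∣ 1 + Polynomial.X :=
    Polynomial.prime_X.dvd_of_dvd_pow h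
  obtain ⟨t, ht⟩ := hX
  have := congrArg (Polynomial.eval 0) ht
  simp at this

lemma not_one_add_X_dvd_pow_X (n : ℕ) :
    ¬ (1 + Polynomial.X : Polynomial (ZMod 2)) ∣ Polynomial.X ^ n := by
  intro h
  have hX : (1 + Polynomial.X : Polynomial (ZMod 2)) ∣ Polynomial.X :=
    prime_one_add_X.dvd_of_dvd_pow h
  obtain ⟨t, ht⟩ := hX
  have h1 := congrArg (Polynomial.eval 1) ht
  simp only [Polynomial.eval_mul, Polynomial.eval_add, Polynomial.eval_one,
    Polynomial.eval_X] at h1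
  rw [show (1 + 1 : ZMod 2) = 0 by decide, zero_mul] at h1
  exact one_ne_zero h1

lemma dvd_fact : ∀ (k n m : ℕ) (Q : Polynomial (ZMod 2)), n + m ≤ k →
    Q ∣ Polynomial.X ^ n * (1 + Polynomial.X) ^ m →
    ∃ i j : ℕ, Q = Polynomial.X ^ i * (1 + Polynomial.X) ^ j := by
  intro k
  induction k with
  | zero =>
    intro n m Q hnm hdvd
    have hn : n = 0 := by omega
    have hm : m = 0 := by omega
    subst hn; subst hm
    simp only [pow_zero, mul_one] at hdvd
    exact ⟨0, 0, by rw [unit_eq_one (isUnit_of_dvd_one hdvd)]; simp⟩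
  | succ k ih =>
    intro n m Q hnm hdvd
    by_cases hQ : IsUnit Q
    · exact ⟨0, 0, by rw [unit_eq_one hQ]; simp⟩
    have hne : (Polynomial.X ^ n * (1 + Polynomial.X) ^ m : Polynomial (ZMod 2)) ≠ 0 :=
      mul_ne_zero (pow_ne_zero _ Polynomial.X_ne_zero) (pow_ne_zero _ one_add_X_ne_zero)
    have hQ0 : Q ≠ 0 := by
      rintro rfl
      exact hne (zero_dvd_iff.mp hdvd)
    obtain ⟨p, hpirr, hpQ⟩ := WfDvdMonoid.exists_irreducible_factor hQ hQ0
    have hpprime : Prime p := UniqueFactorizationMonoid.irreducible_iff_prime.mp hpirr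
    have hpdvd : p ∣ Polynomial.X ^ n * (1 + Polynomial.X) ^ m := hpQ.trans hdvd
    rcases hpprime.2.2 _ _ hpdvd with hpX | hpY
    · -- p divides X^n
      have hpX' : p ∣ Polynomial.X := hpprime.dvd_of_dvd_pow hpX
      have hpeq : Polynomial.X = p * 1 ∨ IsUnit p := by
        obtain ⟨t, ht⟩ := hpX'
        rcases Polynomial.irreducible_X.isUnit_or_isUnit ht with h | h
        · exact Or.inr h
        · left
          rw [unit_eq_one h] at ht
          rw [ht]
      have hXp : Polynomial.X = p := by
        rcases hpeq with h | h
        · rw [h, mul_one]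
        · exact absurd h hpirr.not_isUnit
      obtain ⟨Q1, rfl⟩ := hpQ
      rw [← hXp] at hdvd ⊢
      have hn1 : 1 ≤ n := by
        by_contra hn0
        have : n = 0 := by omega
        subst this
        rw [pow_zero, one_mul] at hdvd
        exact not_X_dvd_pow_one_add_X m (dvd_trans (Dvd.intro Q1 rfl) hdvd)
      have hre : (Polynomial.X ^ n * (1 + Polynomial.X) ^ m : Polynomial (ZMod 2))
          = Polynomial.X * (Polynomial.X ^ (n - 1) * (1 + Polynomial.X) ^ m) := by
        conv_lhs => rw [show n = (n - 1) + 1 by omega]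
        ring
      rw [hre] at hdvd
      rw [mul_dvd_mul_iff_left (Polynomial.X_ne_zero : (Polynomial.X : Polynomial (ZMod 2)) ≠ 0)] at hdvd
      obtain ⟨i, j, hij⟩ := ih (n - 1) m Q1 (by omega) hdvd
      exact ⟨i + 1, j, by rw [hij]; ring⟩
    · -- p divides (1+X)^m
      have hpY' : p ∣ 1 + Polynomial.X := hpprime.dvd_of_dvd_pow hpY
      have hYp : (1 + Polynomial.X : Polynomial (ZMod 2)) = p := by
        obtain ⟨t, ht⟩ := hpY'
        have : Irreducible (1 + Polynomial.X : Polynomial (ZMod 2)) :=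
          prime_one_add_X.irreducible
        rcases this.isUnit_or_isUnit ht with h | h
        · exact absurd h hpirr.not_isUnit
        · rw [unit_eq_one h, mul_one] at ht
          rw [ht]
      obtain ⟨Q1, rfl⟩ := hpQ
      rw [← hYp] at hdvd ⊢
      have hm1 : 1 ≤ m := by
        by_contra hm0
        have : m = 0 := by omega
        subst this
        rw [pow_zero, mul_one] at hdvd
        exact not_one_add_X_dvd_pow_X n (dvd_trans (Dvd.intro Q1 rfl) hdvd)
      have hre : (Polynomial.X ^ n * (1 + Polynomial.X) ^ m : Polynomial (ZMod 2))
          = (1 + Polynomial.X) * (Polynomial.X ^ n * (1 + Polynomial.X) ^ (m - 1)) := by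
        conv_lhs => rw [show m = (m - 1) + 1 by omega]
        ring
      rw [hre] at hdvd
      rw [mul_dvd_mul_iff_left one_add_X_ne_zero] at hdvd
      obtain ⟨i, j, hij⟩ := ih n (m - 1) Q1 (by omega) hdvd
      exact ⟨i, j + 1, by rw [hij]; ring⟩

/-! ### main classification -/

lemma classify {G : ledrappier ≃ₜ ledrappier}
    (h1 : G * S1 = S1 * G) (h2 : G * S2 = S2 * G) :
    ∃ a b : ℤ, G = S1 ^ a * S2 ^ b := by
  obtain ⟨r, P, hGrep⟩ := repG h1 h2
  have h1' : G⁻¹ * S1 = S1 * G⁻¹ := (Commute.inv_left h1 : Commute G⁻¹ S1)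
  have h2' : G⁻¹ * S2 = S2 * G⁻¹ := (Commute.inv_left h2 : Commute G⁻¹ S2)
  obtain ⟨r', P', hGrep'⟩ := repG h1' h2'
  set s : ℕ := r + r' with hs
  have hid : ∀ y : V, y ∈ ledrappier → ∀ n : pt,
      y n = Phi (P' * P) y (n + ![-(s:ℤ), -(s:ℤ)]) := by
    intro y hy n
    set x : ledrappier := ⟨y, hy⟩ with hx
    have hGx : ((G x : ledrappier) : V) = sig ![-(r:ℤ), -(r:ℤ)] (Phi P y) := by
      funext m
      rw [sig_apply]
      exact hGrep x m
    have hback : x = G⁻¹ (G x) := (G.symm_apply_apply x).symm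
    have step1 : y n = Phi P' ((G x : ledrappier) : V) (n + ![-(r':ℤ), -(r':ℤ)]) := by
      have := hGrep' (G x) n
      rw [← hback] at this
      exact this
    rw [step1, hGx, Phi_sig_comm, sig_apply, ← Phi_mul_apply]
    have hv : (n + ![-(r':ℤ), -(r':ℤ)] + ![-(r:ℤ), -(r:ℤ)] : pt) = n + ![-(s:ℤ), -(s:ℤ)] := by
      funext j
      fin_cases j <;>
        simp [Matrix.vecHead, Matrix.vecTail] <;>
        push_cast [hs] <;> ring
    rw [hv]
  have hRfact : P' * P = Polynomial.X ^ s * (1 + Polynomial.X) ^ s := coeff_extract hid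
  have hPdvd : P ∣ Polynomial.X ^ s * (1 + Polynomial.X) ^ s := by
    rw [← hRfact]
    exact Dvd.intro_left P' rfl
  obtain ⟨α, β, hPeq⟩ := dvd_fact (s + s) s s P le_rfl hPdvd
  refine ⟨(α : ℤ) - r, (β : ℤ) - r, ?_⟩
  apply Homeomorph.ext
  intro x
  apply Subtype.ext
  funext m
  have hrhs : (((S1 ^ ((α : ℤ) - r) * S2 ^ ((β : ℤ) - r)) x : ledrappier) : V) m
      = (x : V) (m + ![(α : ℤ) - r, (β : ℤ) - r]) := T_apply _ _ x m
  rw [hrhs, hGrep x m, hPeq, Phi_XaXb α β x.2, sig_apply]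
  have hv : (m + ![-(r:ℤ), -(r:ℤ)] + ![(α:ℤ), (β:ℤ)] : pt) = m + ![(α:ℤ) - r, (β:ℤ) - r] := by
    funext j
    fin_cases j <;>
      simp [Matrix.vecHead, Matrix.vecTail] <;> ring
  rw [hv]

end
end Led

/-- The Ledrappier shift has minimal symmetry group: the coordinate shifts
`S₁, S₂` restrict to homeomorphisms of `X_L`, and every self-homeomorphism of
`X_L` commuting with both is of the form `S₁^a * S₂^b`; i.e.
`S(X_L) = ⟨S₁,S₂⟩ ≅ ℤ²`. -/
theorem stmt17 :
    ∃ S₁ S₂ : ledrappier ≃ₜ ledrappier,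
      (∀ (x : ledrappier) (n : Fin 2 → ℤ),
        (S₁ x : (Fin 2 → ℤ) → ZMod 2) n =
          (x : (Fin 2 → ℤ) → ZMod 2) (n + Pi.single 0 1)) ∧
      (∀ (x : ledrappier) (n : Fin 2 → ℤ),
        (S₂ x : (Fin 2 → ℤ) → ZMod 2) n =
          (x : (Fin 2 → ℤ) → ZMod 2) (n + Pi.single 1 1)) ∧
      ∀ G : ledrappier ≃ₜ ledrappier,
        G * S₁ = S₁ * G → G * S₂ = S₂ * G →
        ∃ a b : ℤ, G = S₁ ^ a * S₂ ^ b := by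
  refine ⟨Led.S1, Led.S2, fun x n => rfl, fun x n => rfl, fun G h1 h2 => ?_⟩
  exact Led.classify h1 h2
end
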